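/- arXiv:math/9801115 — 9 statements merged into one kernel-verified Lean document; each statement's English description precedes it below -/
import Mathlib

section
/- Let f : ℝ × ℝ → ℝ be smooth with f(·,t) an orientation-preserving embedding for each t, satisfying the geodesic equation f_tt = -2 f_t f_tx / f_x. Then the quantity F(x,t) = f_t(x,t) · f_x(x,t)² is independent of t, i.e. f_t(x,t) f_x(x,t)² = f_t(x,0) f_x(x,0)² for all x and t. -/
/-- Along solutions of the geodesic equation `f_tt = -2 f_t f_tx / f_x`
of the L² metric on orientation-preserving embeddings of ℝ, the quantity
`F = f_t f_x²` is independent of `t`. -/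
theorem stmt0 (f ft fx ftx ftt : ℝ → ℝ → ℝ)
    (hf : ContDiff ℝ (⊤ : ℕ∞) (Function.uncurry f))
    (hft : ∀ x t, HasDerivAt (fun s => f x s) (ft x t) t)
    (hfx : ∀ x t, HasDerivAt (fun y => f y t) (fx x t) x)
    (hftx : ∀ x t, HasDerivAt (fun y => ft y t) (ftx x t) x)
    (hfxt : ∀ x t, HasDerivAt (fun s => fx x s) (ftx x t) t)
    (hftt : ∀ x t, HasDerivAt (fun s => ft x s) (ftt x t) t)
    (hpos : ∀ x t, 0 < fx x t)
    (hgeo : ∀ x t, ftt x t = -2 * ft x t * ftx x t / fx x t) :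
    ∀ x t, ft x t * (fx x t) ^ 2 = ft x 0 * (fx x 0) ^ 2 := by
  intro x t
  have key : ∀ s : ℝ, HasDerivAt (fun s => ft x s * (fx x s) ^ 2) 0 s := by
    intro s
    have h := (hftt x s).mul ((hfxt x s).pow 2)
    have hne : fx x s ≠ 0 := (hpos x s).ne'
    have h' : HasDerivAt (fun s => ft x s * (fx x s) ^ 2) _ s := h
    convert h' using 1
    rw [hgeo x s]
    rw [Pi.pow_apply]
    push_cast
    field_simp
    ring
  have := fun s : ℝ => (key s)
  have hconst : ∀ a b : ℝ, ft x a * (fx x a) ^ 2 = ft x b * (fx x b) ^ 2 := by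
    intro a b
    have := is_const_of_deriv_eq_zero (f := fun s => ft x s * (fx x s) ^ 2)
      (fun s => (key s).differentiableAt) (fun s => (key s).deriv) a b
    exact this
  exact hconst t 0
end

section
/- Let f : ℝ × ℝ → ℝ be smooth with each f(·,t) a diffeomorphism of ℝ satisfying f_tt = -2 f_t f_tx / f_x, and define u(x,t) = f_t(f(·,t)⁻¹(x), t). Then u satisfies Burgers' equation u_t = -3 u u_x. -/
lemma clm_apply_basis (l : ℝ × ℝ →L[ℝ] ℝ) (v : ℝ × ℝ) :
    l v = v.1 * l (1, 0) + v.2 * l (0, 1) := by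
  have hv : v = v.1 • ((1:ℝ), (0:ℝ)) + v.2 • ((0:ℝ), (1:ℝ)) := by
    ext <;> simp
  conv_lhs => rw [hv]
  rw [map_add, map_smul, map_smul, smul_eq_mul, smul_eq_mul]

lemma clm_ext2 (l₁ l₂ : ℝ × ℝ →L[ℝ] ℝ × ℝ)
    (h1 : l₁ (1, 0) = l₂ (1, 0)) (h2 : l₁ (0, 1) = l₂ (0, 1)) : l₁ = l₂ := by
  ext <;> simp [h1, h2]

noncomputable def shearEquiv (A B : ℝ) (hA : A ≠ 0) : (ℝ × ℝ) ≃L[ℝ] (ℝ × ℝ) :=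
  LinearEquiv.toContinuousLinearEquiv
    { toFun := fun p => (A * p.1 + B * p.2, p.2)
      invFun := fun p => ((p.1 - B * p.2) / A, p.2)
      map_add' := by intro p q; ext <;> simp <;> ring
      map_smul' := by intro c p; ext <;> simp <;> ring
      left_inv := by intro p; ext <;> field_simp <;> ring
      right_inv := by intro p; ext <;> field_simp <;> ring }

@[simp] lemma shearEquiv_apply (A B : ℝ) (hA : A ≠ 0) (p : ℝ × ℝ) :
    (shearEquiv A B hA : (ℝ × ℝ) →L[ℝ] ℝ × ℝ) p = (A * p.1 + B * p.2, p.2) := rfl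

@[simp] lemma shearEquiv_symm_apply (A B : ℝ) (hA : A ≠ 0) (p : ℝ × ℝ) :
    ((shearEquiv A B hA).symm : (ℝ × ℝ) →L[ℝ] ℝ × ℝ) p = ((p.1 - B * p.2) / A, p.2) := rfl

/-- In Eulerian form `u(x,t) = f_t(f(·,t)⁻¹(x),t)`, the geodesic equation
`f_tt = -2 f_t f_tx / f_x` becomes Burgers' equation `u_t = -3 u u_x`. -/
theorem stmt1 (f g ft fx ftx ftt u ut ux : ℝ → ℝ → ℝ)
    (hf : ContDiff ℝ (⊤ : ℕ∞) (Function.uncurry f))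
    (hinv1 : ∀ x t, f (g x t) t = x)
    (hinv2 : ∀ x t, g (f x t) t = x)
    (hft : ∀ x t, HasDerivAt (fun s => f x s) (ft x t) t)
    (hfx : ∀ x t, HasDerivAt (fun y => f y t) (fx x t) x)
    (hftx : ∀ x t, HasDerivAt (fun y => ft y t) (ftx x t) x)
    (hftt : ∀ x t, HasDerivAt (fun s => ft x s) (ftt x t) t)
    (hpos : ∀ x t, 0 < fx x t)
    (hgeo : ∀ x t, ftt x t = -2 * ft x t * ftx x t / fx x t)
    (hu : ∀ x t, u x t = ft (g x t) t)
    (hut : ∀ x t, HasDerivAt (fun s => u x s) (ut x t) t)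
    (hux : ∀ x t, HasDerivAt (fun y => u y t) (ux x t) x) :
    ∀ x t, ut x t = -3 * u x t * ux x t := by
  intro x t
  set F : ℝ × ℝ → ℝ := Function.uncurry f with hFdef
  have hFd : ∀ p : ℝ × ℝ, HasStrictFDerivAt F (fderiv ℝ F p) p := fun p =>
    hf.hasStrictFDerivAt (by simp)
  -- directional components of fderiv F
  have hcomp1 : ∀ b s, fderiv ℝ F (b, s) (1, 0) = fx b s := by
    intro b s
    have hl : HasDerivAt (fun y : ℝ => (y, s)) ((1:ℝ), (0:ℝ)) b :=
      (hasDerivAt_id b).prodMk (hasDerivAt_const b s)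
    have h2 : HasDerivAt (fun y => F (y, s)) (fderiv ℝ F (b, s) (1, 0)) b :=
      by have := (hFd (b, s)).hasFDerivAt.comp_hasDerivAt b hl; exact this
    exact h2.unique (hfx b s)
  have hcomp2 : ∀ b s, fderiv ℝ F (b, s) (0, 1) = ft b s := by
    intro b s
    have hl : HasDerivAt (fun r : ℝ => (b, r)) ((0:ℝ), (1:ℝ)) s :=
      (hasDerivAt_const s b).prodMk (hasDerivAt_id s)
    have h2 : HasDerivAt (fun r => F (b, r)) (fderiv ℝ F (b, s) (0, 1)) s :=
      (hFd (b, s)).hasFDerivAt.comp_hasDerivAt s hl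
    exact h2.unique (hft b s)
  -- joint version of ft
  set ftJ : ℝ × ℝ → ℝ := fun p => fderiv ℝ F p (0, 1) with hftJdef
  have hftJeq : ∀ b s, ftJ (b, s) = ft b s := fun b s => hcomp2 b s
  have hftJc : ContDiff ℝ (⊤ : ℕ∞) ftJ := by
    have h1 : ContDiff ℝ (⊤ : ℕ∞) (fun p => fderiv ℝ F p) := hf.fderiv_right (by simp)
    exact h1.clm_apply contDiff_const
  set a := g x t with ha
  have hfa : f a t = x := hinv1 x t
  have hJd : HasFDerivAt ftJ (fderiv ℝ ftJ (a, t)) (a, t) :=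
    (hftJc.differentiable (by simp) (a, t)).hasFDerivAt
  have hJ1 : fderiv ℝ ftJ (a, t) (1, 0) = ftx a t := by
    have hl : HasDerivAt (fun y : ℝ => (y, t)) ((1:ℝ), (0:ℝ)) a :=
      (hasDerivAt_id a).prodMk (hasDerivAt_const a t)
    have h2 : HasDerivAt (fun y => ftJ (y, t)) (fderiv ℝ ftJ (a, t) (1, 0)) a :=
      by have := hJd.comp_hasDerivAt a hl; exact this
    have h3 : HasDerivAt (fun y => ft y t) (fderiv ℝ ftJ (a, t) (1, 0)) a :=
      h2.congr_of_eventuallyEq (Filter.Eventually.of_forall fun y => (hftJeq y t).symm)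
    exact h3.unique (hftx a t)
  have hJ2 : fderiv ℝ ftJ (a, t) (0, 1) = ftt a t := by
    have hl : HasDerivAt (fun r : ℝ => (a, r)) ((0:ℝ), (1:ℝ)) t :=
      (hasDerivAt_const t a).prodMk (hasDerivAt_id t)
    have h2 : HasDerivAt (fun r => ftJ (a, r)) (fderiv ℝ ftJ (a, t) (0, 1)) t :=
      hJd.comp_hasDerivAt t hl
    have h3 : HasDerivAt (fun r => ft a r) (fderiv ℝ ftJ (a, t) (0, 1)) t :=
      h2.congr_of_eventuallyEq (Filter.Eventually.of_forall fun r => (hftJeq a r).symm)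
    exact h3.unique (hftt a t)
  -- the flow map and its inverse
  set Φ : ℝ × ℝ → ℝ × ℝ := fun p => (F p, p.2) with hΦdef
  set Ψ : ℝ × ℝ → ℝ × ℝ := fun p => (g p.1 p.2, p.2) with hΨdef
  have hΦinj : Function.Injective Φ := by
    rintro ⟨b, s⟩ ⟨c, r⟩ h
    have h2 : s = r := congrArg Prod.snd h
    subst h2
    have h1 : f b s = f c s := congrArg Prod.fst h
    have hb : b = c := by
      have := congrArg (fun y => g y s) h1
      simpa [hinv2] using this
    simp [hb]
  have hΦΨ : ∀ p, Φ (Ψ p) = p := by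
    intro p
    simp only [hΦdef, hΨdef, hFdef, Function.uncurry, hinv1]
  set A := fx a t with hA'
  set B := ft a t with hB'
  have hA : A ≠ 0 := (hpos a t).ne'
  have heΦ : HasStrictFDerivAt Φ ((shearEquiv A B hA : (ℝ × ℝ) →L[ℝ] ℝ × ℝ)) (a, t) := by
    have hsnd : HasStrictFDerivAt (fun p : ℝ × ℝ => p.2)
        (ContinuousLinearMap.snd ℝ ℝ ℝ) (a, t) :=
      (ContinuousLinearMap.snd ℝ ℝ ℝ).hasStrictFDerivAt
    have hD : HasStrictFDerivAt Φ
        ((fderiv ℝ F (a, t)).prod (ContinuousLinearMap.snd ℝ ℝ ℝ)) (a, t) :=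
      (hFd (a, t)).prodMk hsnd
    have heq : ((fderiv ℝ F (a, t)).prod (ContinuousLinearMap.snd ℝ ℝ ℝ))
        = (shearEquiv A B hA : (ℝ × ℝ) →L[ℝ] ℝ × ℝ) := by
      apply clm_ext2 <;> simp [ContinuousLinearMap.prod_apply, hcomp1, hcomp2, hA', hB']
    rw [← heq]
    exact hD
  have hxt : Φ (a, t) = (x, t) := by simp [hΦdef, hFdef, Function.uncurry, hfa]
  have hev : (heΦ.localInverse Φ (shearEquiv A B hA) (a, t)) =ᶠ[nhds (x, t)] Ψ := by
    have : (x, t) = Φ (a, t) := hxt.symm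
    rw [this]
    filter_upwards [heΦ.eventually_right_inverse] with y hy
    exact hΦinj (by rw [hy, hΦΨ])
  have hΨd : HasStrictFDerivAt Ψ
      (((shearEquiv A B hA).symm : (ℝ × ℝ) →L[ℝ] ℝ × ℝ)) (x, t) := by
    have h0 := heΦ.to_localInverse
    rw [hxt] at h0
    exact h0.congr_of_eventuallyEq hev
  have hΨd' := hΨd.hasFDerivAt
  -- derivative of g in t
  have hgt : HasDerivAt (fun s => g x s) ((0 - B * 1) / A) t := by
    have hl : HasDerivAt (fun s : ℝ => ((x:ℝ), s)) ((0:ℝ), (1:ℝ)) t :=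
      (hasDerivAt_const t x).prodMk (hasDerivAt_id t)
    have h2 : HasDerivAt (fun s => Ψ (x, s))
        (((shearEquiv A B hA).symm : (ℝ × ℝ) →L[ℝ] ℝ × ℝ) (0, 1)) t :=
      hΨd'.comp_hasDerivAt t hl
    have h3 := (ContinuousLinearMap.fst ℝ ℝ ℝ).hasFDerivAt.comp_hasDerivAt t h2
    have h4 : HasDerivAt (Prod.fst ∘ fun s => Ψ (x, s)) ((0 - B * 1) / A) t := by simpa using h3
    exact h4
  -- derivative of g in x
  have hgx : HasDerivAt (fun y => g y t) ((1 - B * 0) / A) x := by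
    have hl : HasDerivAt (fun y : ℝ => (y, t)) ((1:ℝ), (0:ℝ)) x :=
      (hasDerivAt_id x).prodMk (hasDerivAt_const x t)
    have h2 : HasDerivAt (fun y => Ψ (y, t))
        (((shearEquiv A B hA).symm : (ℝ × ℝ) →L[ℝ] ℝ × ℝ) (1, 0)) x :=
      hΨd'.comp_hasDerivAt x hl
    have h3 := (ContinuousLinearMap.fst ℝ ℝ ℝ).hasFDerivAt.comp_hasDerivAt x h2
    have h4 : HasDerivAt (Prod.fst ∘ fun y => Ψ (y, t)) ((1 - B * 0) / A) x := by simpa using h3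
    exact h4
  -- compute ut
  have hut' : ut x t = (0 - B * 1) / A * ftx a t + 1 * ftt a t := by
    have hl : HasDerivAt (fun s => (g x s, s)) (((0 - B * 1) / A, (1:ℝ))) t :=
      hgt.prodMk (hasDerivAt_id t)
    have h2 := hJd.comp_hasDerivAt_of_eq t hl (by rw [ha])
    have h3 : HasDerivAt (fun s => u x s)
        (fderiv ℝ ftJ (a, t) ((0 - B * 1) / A, 1)) t :=
      h2.congr_of_eventuallyEq
        (Filter.Eventually.of_forall fun s => by simp only [hu, hftJeq, Function.comp])
    have h4 := (hut x t).unique h3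
    rw [h4, clm_apply_basis, hJ1, hJ2]
  -- compute ux
  have hux' : ux x t = (1 - B * 0) / A * ftx a t + 0 * ftt a t := by
    have hl : HasDerivAt (fun y => (g y t, t)) (((1 - B * 0) / A, (0:ℝ))) x :=
      hgx.prodMk (hasDerivAt_const x t)
    have h2 := hJd.comp_hasDerivAt_of_eq x hl (by rw [ha])
    have h3 : HasDerivAt (fun y => u y t)
        (fderiv ℝ ftJ (a, t) ((1 - B * 0) / A, 0)) x :=
      h2.congr_of_eventuallyEq
        (Filter.Eventually.of_forall fun y => by simp only [hu, hftJeq, Function.comp])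
    have h4 := (hux x t).unique h3
    rw [h4, clm_apply_basis, hJ1, hJ2]
  rw [hut', hux', hu, hgeo, ← ha, ← hA', ← hB']
  field_simp
  ring
end

section
/- Let u be a smooth 2π-periodic-in-x solution of KdV: u_t = -3u u_x - a u_xxx (a constant), and let (y, b) solve the Virasoro Jacobi equation with b_tt = ∫_{S¹}(-y_txxx u + y_xxx(3u_x u + a u_xxx)) dx. Then the quantity B₁ := b_t + ∫_{S¹} y_xxx u dx is constant in t. -/
open Real

/-- `n`-th partial derivative in the first (space) variable. -/
noncomputable def pdx (n : ℕ) (f : ℝ → ℝ → ℝ) (x t : ℝ) : ℝ := iteratedDeriv n (fun x' => f x' t) x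


lemma slice_hasDerivAt (g : ℝ × ℝ → ℝ) (hg : ContDiff ℝ (⊤ : ℕ∞) g) (x t : ℝ) :
    HasDerivAt (fun x' => g (x', t)) (fderiv ℝ g (x,t) (1,0)) x :=
  (hg.differentiable (by simp) (x,t)).hasFDerivAt.comp_hasDerivAt x
    ((hasDerivAt_id x).prodMk (hasDerivAt_const x t))

lemma slice_hasDerivAt_t (g : ℝ × ℝ → ℝ) (hg : ContDiff ℝ (⊤ : ℕ∞) g) (x t : ℝ) :
    HasDerivAt (fun s => g (x, s)) (fderiv ℝ g (x,t) (0,1)) t :=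
  (hg.differentiable (by simp) (x,t)).hasFDerivAt.comp_hasDerivAt t
    ((hasDerivAt_const t x).prodMk (hasDerivAt_id t))

lemma pdx_contDiff (n : ℕ) (f : ℝ → ℝ → ℝ) (hf : ContDiff ℝ (⊤ : ℕ∞) (Function.uncurry f)) :
    ContDiff ℝ (⊤ : ℕ∞) (Function.uncurry (pdx n f)) := by
  induction n with
  | zero =>
    have : Function.uncurry (pdx 0 f) = Function.uncurry f := by
      funext p; simp [pdx, Function.uncurry, iteratedDeriv_zero]
    rw [this]; exact hf
  | succ n ih =>
    have key : Function.uncurry (pdx (n+1) f)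
        = fun p : ℝ × ℝ => fderiv ℝ (Function.uncurry (pdx n f)) p (1,0) := by
      funext p
      have h := slice_hasDerivAt (Function.uncurry (pdx n f)) ih p.1 p.2
      have h2 : (fun x' => Function.uncurry (pdx n f) (x', p.2)) = fun x' =>
          iteratedDeriv n (fun x'' => f x'' p.2) x' := by
        funext x'; rfl
      rw [h2] at h
      have : Function.uncurry (pdx (n+1) f) p
          = deriv (fun x' => iteratedDeriv n (fun x'' => f x'' p.2) x') p.1 := by
        simp [pdx, Function.uncurry, iteratedDeriv_succ]
      rw [this, h.deriv]
    rw [key]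
    exact (ih.fderiv_right (by simp)).clm_apply contDiff_const

lemma hasDerivAt_param_integral (g g' : ℝ → ℝ → ℝ)
    (hgc : Continuous fun p : ℝ × ℝ => g p.1 p.2)
    (hg'c : Continuous fun p : ℝ × ℝ => g' p.1 p.2)
    (hd : ∀ x t, HasDerivAt (fun s => g x s) (g' x t) t) (t₀ : ℝ) :
    HasDerivAt (fun t => ∫ x in (0:ℝ)..(2*π), g x t) (∫ x in (0:ℝ)..(2*π), g' x t₀) t₀ := by
  set K : Set (ℝ × ℝ) := (Set.uIcc (0:ℝ) (2*π)) ×ˢ (Metric.closedBall t₀ 1) with hK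
  have hKc : IsCompact K := isCompact_uIcc.prod (isCompact_closedBall t₀ 1)
  obtain ⟨M, hM⟩ := hKc.exists_bound_of_continuousOn hg'c.continuousOn
  have main := intervalIntegral.hasDerivAt_integral_of_dominated_loc_of_deriv_le
    (F := fun t x => g x t) (F' := fun t x => g' x t) (a := (0:ℝ)) (b := 2*π)
    (x₀ := t₀) (bound := fun _ => M) (s := Metric.ball t₀ 1) (μ := MeasureTheory.volume)
    (Metric.ball_mem_nhds t₀ one_pos)
    (Filter.Eventually.of_forall fun t =>
      (hgc.comp (continuous_id.prodMk continuous_const)).aestronglyMeasurable)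
    ((hgc.comp (continuous_id.prodMk continuous_const)).intervalIntegrable 0 (2*π))
    ((hg'c.comp (continuous_id.prodMk continuous_const)).aestronglyMeasurable)
    ?_ (intervalIntegrable_const (c := M)) ?_
  · exact main.2
  · refine Filter.Eventually.of_forall fun x hx s hs => ?_
    exact hM (x, s) ⟨Set.uIoc_subset_uIcc hx, Metric.ball_subset_closedBall hs⟩
  · exact Filter.Eventually.of_forall fun x _ s _ => hd x s

/-- Along a periodic solution `u` of KdV `u_t = -3uu_x - au_xxx` and a
solution `(y,b)` of the Virasoro Jacobi equation with
`b_tt = ∫ (-y_txxx u + y_xxx(3u_x u + a u_xxx))`, the quantity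
`B₁ = b_t + ∫ y_xxx u` is constant in `t`. -/
theorem stmt10 (a : ℝ) (u ut y ytxxx : ℝ → ℝ → ℝ) (b bt btt : ℝ → ℝ)
    (hu : ContDiff ℝ (⊤ : ℕ∞) (Function.uncurry u)) (hy : ContDiff ℝ (⊤ : ℕ∞) (Function.uncurry y))
    (hup : ∀ t, Function.Periodic (fun x => u x t) (2 * π))
    (hyp : ∀ t, Function.Periodic (fun x => y x t) (2 * π))
    (hut : ∀ x t, HasDerivAt (fun s => u x s) (ut x t) t)
    (hytxxx : ∀ x t, HasDerivAt (fun s => pdx 3 y x s) (ytxxx x t) t)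
    (hKdV : ∀ x t, ut x t = -3 * pdx 1 u x t * u x t - a * pdx 3 u x t)
    (hbt : ∀ t, HasDerivAt b (bt t) t)
    (hbtt : ∀ t, HasDerivAt bt (btt t) t)
    (hbttEq : ∀ t, btt t = ∫ x in (0:ℝ)..(2 * π),
        (-(ytxxx x t) * u x t + pdx 3 y x t * (3 * pdx 1 u x t * u x t + a * pdx 3 u x t))) :
    ∀ t₁ t₂ : ℝ,
      bt t₁ + (∫ x in (0:ℝ)..(2 * π), pdx 3 y x t₁ * u x t₁)
        = bt t₂ + ∫ x in (0:ℝ)..(2 * π), pdx 3 y x t₂ * u x t₂ := by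
  have hy3 : ContDiff ℝ (⊤ : ℕ∞) (Function.uncurry (pdx 3 y)) := pdx_contDiff 3 y hy
  -- joint continuity of ytxxx and ut
  have hytc : Continuous fun p : ℝ × ℝ => ytxxx p.1 p.2 := by
    have heq : (fun p : ℝ × ℝ => ytxxx p.1 p.2)
        = fun p => fderiv ℝ (Function.uncurry (pdx 3 y)) p (0,1) := by
      funext p
      exact (hytxxx p.1 p.2).unique (slice_hasDerivAt_t _ hy3 p.1 p.2)
    rw [heq]
    exact (ContDiff.continuous (n := (⊤:ℕ∞)) ((hy3.fderiv_right (by simp)).clm_apply contDiff_const))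
  have hutc : Continuous fun p : ℝ × ℝ => ut p.1 p.2 := by
    have heq : (fun p : ℝ × ℝ => ut p.1 p.2)
        = fun p => fderiv ℝ (Function.uncurry u) p (0,1) := by
      funext p
      exact (hut p.1 p.2).unique (slice_hasDerivAt_t _ hu p.1 p.2)
    rw [heq]
    exact (ContDiff.continuous (n := (⊤:ℕ∞)) ((hu.fderiv_right (by simp)).clm_apply contDiff_const))
  set g : ℝ → ℝ → ℝ := fun x t => pdx 3 y x t * u x t with hg
  set g' : ℝ → ℝ → ℝ := fun x t => ytxxx x t * u x t + pdx 3 y x t * ut x t with hg'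
  have hgc : Continuous fun p : ℝ × ℝ => g p.1 p.2 :=
    hy3.continuous.mul hu.continuous
  have hg'c : Continuous fun p : ℝ × ℝ => g' p.1 p.2 :=
    (hytc.mul hu.continuous).add (hy3.continuous.mul hutc)
  have hd : ∀ x t, HasDerivAt (fun s => g x s) (g' x t) t :=
    fun x t => (hytxxx x t).mul (hut x t)
  have hF : ∀ t₀, HasDerivAt (fun t => ∫ x in (0:ℝ)..(2*π), g x t)
      (∫ x in (0:ℝ)..(2*π), g' x t₀) t₀ :=
    hasDerivAt_param_integral g g' hgc hg'c hd
  have hH : ∀ t₀, HasDerivAt (fun t => bt t + ∫ x in (0:ℝ)..(2*π), g x t) 0 t₀ := by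
    intro t₀
    have h1 := (hbtt t₀).add (hF t₀)
    have hsl : ∀ (f : ℝ → ℝ → ℝ), Continuous (fun p : ℝ × ℝ => f p.1 p.2) →
        Continuous (fun x => f x t₀) := fun f hf =>
      hf.comp (continuous_id.prodMk continuous_const)
    have hcy1 : Continuous fun x => pdx 3 y x t₀ := hsl _ hy3.continuous
    have hcu1 : Continuous fun x => pdx 1 u x t₀ := hsl _ (pdx_contDiff 1 u hu).continuous
    have hcu3 : Continuous fun x => pdx 3 u x t₀ := hsl _ (pdx_contDiff 3 u hu).continuous
    have hcu : Continuous fun x => u x t₀ := hsl _ hu.continuous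
    have hcyt : Continuous fun x => ytxxx x t₀ := hsl _ hytc
    have hint1 : IntervalIntegrable (fun x =>
        -(ytxxx x t₀) * u x t₀ + pdx 3 y x t₀ * (3 * pdx 1 u x t₀ * u x t₀ + a * pdx 3 u x t₀))
        MeasureTheory.volume 0 (2*π) :=
      ((hcyt.neg.mul hcu).add (hcy1.mul (((continuous_const.mul hcu1).mul hcu).add
        (continuous_const.mul hcu3)))).intervalIntegrable 0 (2*π)
    have hint2 : IntervalIntegrable (fun x => g' x t₀) MeasureTheory.volume 0 (2*π) :=
      (hsl _ hg'c).intervalIntegrable 0 (2*π)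
    have h2 : btt t₀ + (∫ x in (0:ℝ)..(2*π), g' x t₀) = 0 := by
      rw [hbttEq, ← intervalIntegral.integral_add hint1 hint2]
      have hz : ∀ x ∈ Set.uIcc (0:ℝ) (2*π),
          (-(ytxxx x t₀) * u x t₀ + pdx 3 y x t₀ * (3 * pdx 1 u x t₀ * u x t₀ + a * pdx 3 u x t₀))
            + g' x t₀ = 0 := by
        intro x _
        have := hKdV x t₀
        simp only [hg']
        rw [this]; ring
      rw [intervalIntegral.integral_congr hz]
      simp
    rwa [h2] at h1
  intro t₁ t₂
  exact is_const_of_deriv_eq_zero (fun t => (hH t).differentiableAt)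
    (fun t => (hH t).deriv) t₁ t₂
end

section
/- With h₁ = sin and h₂ = cos on S¹, the sectional curvature -π(8 + a₁² + a₂² - 3π) of the Virasoro-Bott metric is positive when a₁² + a₂² < 3π - 8 (in particular for a₁ = a₂ = 0) and negative when a₁² + a₂² > 3π - 8. In particular the sectional curvature of the right-invariant L² metric on the Virasoro-Bott group does not have constant sign. -/
open Real

/-- The sectional curvature value `-π(8 + a₁² + a₂² - 3π)` of the
Virasoro-Bott metric on the plane spanned by `(sin, a₁)`, `(cos, a₂)` is positive for
`a₁ = a₂ = 0`, positive when `a₁² + a₂² < 3π - 8`, negative when `a₁² + a₂² > 3π - 8`;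
in particular the sectional curvature does not have constant sign. -/
theorem stmt12 :
    (-π * (8 + (0:ℝ) ^ 2 + (0:ℝ) ^ 2 - 3 * π) > 0)
    ∧ (∀ a₁ a₂ : ℝ, a₁ ^ 2 + a₂ ^ 2 < 3 * π - 8 →
        -π * (8 + a₁ ^ 2 + a₂ ^ 2 - 3 * π) > 0)
    ∧ (∀ a₁ a₂ : ℝ, a₁ ^ 2 + a₂ ^ 2 > 3 * π - 8 →
        -π * (8 + a₁ ^ 2 + a₂ ^ 2 - 3 * π) < 0)
    ∧ (∃ a₁ a₂ b₁ b₂ : ℝ,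
        -π * (8 + a₁ ^ 2 + a₂ ^ 2 - 3 * π) > 0
        ∧ -π * (8 + b₁ ^ 2 + b₂ ^ 2 - 3 * π) < 0) := by
  have hπ : (0:ℝ) < π := Real.pi_pos
  have h3 : (3:ℝ) < π := by linarith [Real.pi_gt_three]
  have pos : ∀ a₁ a₂ : ℝ, a₁ ^ 2 + a₂ ^ 2 < 3 * π - 8 →
      -π * (8 + a₁ ^ 2 + a₂ ^ 2 - 3 * π) > 0 := by
    intro a₁ a₂ h
    nlinarith
  have neg : ∀ a₁ a₂ : ℝ, a₁ ^ 2 + a₂ ^ 2 > 3 * π - 8 →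
      -π * (8 + a₁ ^ 2 + a₂ ^ 2 - 3 * π) < 0 := by
    intro a₁ a₂ h
    nlinarith
  refine ⟨by nlinarith, pos, neg, 0, 0, π, 0, by nlinarith, ?_⟩
  exact neg π 0 (by nlinarith)
end

section
/- Let 𝔤 be a Lie algebra with inner product admitting transposes ad(ξ)ᵀ, and set α(ξ)η := ad(η)ᵀξ. Define R(X,Y) := -¼[ad(X)ᵀ+ad(X), ad(Y)ᵀ+ad(Y)] + ¼[ad(X)ᵀ-ad(X), α(Y)] + ¼[α(X), ad(Y)ᵀ-ad(Y)] + ¼[α(X),α(Y)] + ½α([X,Y]) (commutators of operators). Then for all X, Y, Z, U ∈ 𝔤: ⟨4R(X,Y)Z, U⟩ = 2⟨[X,Y],[Z,U]⟩ - ⟨[Y,Z],[X,U]⟩ + ⟨[X,Z],[Y,U]⟩ - ⟨Z,[U,[X,Y]]⟩ + ⟨U,[Z,[X,Y]]⟩ - ⟨Y,[X,[U,Z]]⟩ - ⟨X,[Y,[Z,U]]⟩ + ⟨ad(X)ᵀZ, ad(Y)ᵀU⟩ + ⟨ad(X)ᵀZ, ad(U)ᵀY⟩ + ⟨ad(Z)ᵀX,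 ad(Y)ᵀU⟩ - ⟨ad(U)ᵀX, ad(Y)ᵀZ⟩ - ⟨ad(Y)ᵀZ, ad(X)ᵀU⟩ - ⟨ad(Z)ᵀY, ad(X)ᵀU⟩ - ⟨ad(U)ᵀX, ad(Z)ᵀY⟩ + ⟨ad(U)ᵀY, ad(Z)ᵀX⟩. -/
/-- The curvature of the right-invariant metric on a Lie group, expressed
at the Lie algebra level via `ad`, `adᵀ` and `α(ξ)η = ad(η)ᵀξ`, satisfies the
Arnold-type formula for `⟨4R(X,Y)Z,U⟩`. -/
theorem stmt15 (L : Type*) [LieRing L] [LieAlgebra ℝ L]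
    (ip : L →ₗ[ℝ] L →ₗ[ℝ] ℝ)
    (hsymm : ∀ X Y : L, ip X Y = ip Y X)
    (hpos : ∀ X : L, X ≠ 0 → 0 < ip X X)
    (adT : L → L → L)
    (hadT : ∀ X Y Z : L, ip ⁅X, Y⁆ Z = ip Y (adT X Z))
    (X Y Z U : L) :
    let α : L → L → L := fun W V => adT V W
    let comm : (L → L) → (L → L) → (L → L) := fun A B V => A (B V) - B (A V)
    let R : L :=
      -((1/4 : ℝ) • comm (fun V => adT X V + ⁅X, V⁆) (fun V => adT Y V + ⁅Y, V⁆) Z)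
      + (1/4 : ℝ) • comm (fun V => adT X V - ⁅X, V⁆) (α Y) Z
      + (1/4 : ℝ) • comm (α X) (fun V => adT Y V - ⁅Y, V⁆) Z
      + (1/4 : ℝ) • comm (α X) (α Y) Z
      + (1/2 : ℝ) • α ⁅X, Y⁆ Z
    ip ((4 : ℝ) • R) U =
      2 * ip ⁅X, Y⁆ ⁅Z, U⁆ - ip ⁅Y, Z⁆ ⁅X, U⁆ + ip ⁅X, Z⁆ ⁅Y, U⁆
      - ip Z ⁅U, ⁅X, Y⁆⁆ + ip U ⁅Z, ⁅X, Y⁆⁆ - ip Y ⁅X, ⁅U, Z⁆⁆ - ip X ⁅Y, ⁅Z, U⁆⁆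
      + ip (adT X Z) (adT Y U) + ip (adT X Z) (adT U Y) + ip (adT Z X) (adT Y U)
      - ip (adT U X) (adT Y Z) - ip (adT Y Z) (adT X U) - ip (adT Z Y) (adT X U)
      - ip (adT U X) (adT Z Y) + ip (adT U Y) (adT Z X) := by
  intro α comm R
  have h1 : ∀ a w u : L, ip (adT a w) u = ip ⁅a, u⁆ w := fun a w u =>
    (hsymm _ _).trans (hadT a u w).symm
  have h2 : ∀ a w u : L, ip u (adT a w) = ip ⁅a, u⁆ w := fun a w u => (hadT a u w).symm
  unfold R comm α
  simp only [map_add, map_sub, map_neg, map_smul, LinearMap.add_apply, LinearMap.sub_apply,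
    LinearMap.neg_apply, LinearMap.smul_apply, smul_eq_mul, h1, h2,
    lie_add, add_lie, lie_sub, sub_lie, lie_neg, neg_lie]
  have skw : ∀ a b d : L, ip ⁅a, b⁆ d = -ip ⁅b, a⁆ d := fun a b d => by
    rw [← lie_skew, map_neg, LinearMap.neg_apply]
  have jac : ∀ a b c d : L, ip ⁅a, ⁅b, c⁆⁆ d = ip ⁅⁅a, b⁆, c⁆ d + ip ⁅b, ⁅a, c⁆⁆ d :=
    fun a b c d => by rw [leibniz_lie, map_add, LinearMap.add_apply]
  linear_combination (norm := ring1)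
    -hadT X (adT Y Z) U - hadT X (adT Y U) Z - hadT X (adT Z Y) U - hadT X (adT U Y) Z
    + hadT Y (adT X Z) U + hadT Y (adT X U) Z + hadT Y (adT Z X) U + hadT Z (adT X U) Y
    - hadT Z (adT Y U) X + hadT U (adT X Z) Y
    + hsymm X ⁅Y, ⁅Z, U⁆⁆ + hsymm Y ⁅X, ⁅U, Z⁆⁆ + hsymm Z ⁅U, ⁅X, Y⁆⁆ - hsymm U ⁅Z, ⁅X, Y⁆⁆
    + hsymm (adT X Z) (adT Y U) + hsymm (adT X Z) (adT U Y) + hsymm (adT X U) (adT Y Z)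
    + hsymm (adT X U) (adT Z Y) - hsymm (adT Y U) (adT Z X)
    - 2 * hsymm ⁅X, Y⁆ ⁅Z, U⁆ - hsymm ⁅X, Z⁆ ⁅Y, U⁆ - hsymm ⁅X, U⁆ ⁅Y, Z⁆
    - skw Z ⁅X, Y⁆ U + skw Z ⁅X, U⁆ Y - skw U (adT X Z) Y + skw U (adT Y Z) X
    - skw U (adT Z X) Y + skw U (adT Z Y) X + skw U ⁅X, Y⁆ Z + skw U ⁅X, Z⁆ Y
    - jac X Y Z U + jac X Y U Z + jac X U Z Y + jac Y Z U X
end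

section
/- Let u, y, z be smooth functions of (t,x), 2π-periodic in x, with y and z solutions of the Jacobi equation y_tt = -3u²y_xx - 4u y_tx - 2u_x y_t along a solution u of Burgers' equation u_t = -3u_x u. Then σ(y,z) := ∫_{S¹} (y z_t - y_t z + 2u(y z_x - y_x z)) dx is constant in t. -/
open Real

section helpers
variable {F : ℝ × ℝ → ℝ}

lemma sliceX (hF : ContDiff ℝ (⊤ : ℕ∞) F) (x t : ℝ) :
    HasDerivAt (fun x' => F (x', t)) (fderiv ℝ F (x, t) (1, 0)) x :=
  (hF.differentiable (by simp) (x, t)).hasFDerivAt.comp_hasDerivAt x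
    ((hasDerivAt_id x).prodMk (hasDerivAt_const x t))

lemma sliceT (hF : ContDiff ℝ (⊤ : ℕ∞) F) (x t : ℝ) :
    HasDerivAt (fun s => F (x, s)) (fderiv ℝ F (x, t) (0, 1)) t :=
  (hF.differentiable (by simp) (x, t)).hasFDerivAt.comp_hasDerivAt t
    ((hasDerivAt_const t x).prodMk (hasDerivAt_id t))

lemma pdSmooth (hF : ContDiff ℝ (⊤ : ℕ∞) F) (v : ℝ × ℝ) :
    ContDiff ℝ (⊤ : ℕ∞) (fun p => fderiv ℝ F p v) :=
  (hF.fderiv_right (by simp)).clm_apply contDiff_const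

lemma fderiv_pd (hF : ContDiff ℝ (⊤ : ℕ∞) F) (p v w : ℝ × ℝ) :
    fderiv ℝ (fun q => fderiv ℝ F q v) p w = fderiv ℝ (fderiv ℝ F) p w v := by
  have hd : DifferentiableAt ℝ (fderiv ℝ F) p :=
    ((hF.fderiv_right (m := (⊤ : ℕ∞)) (by simp)).differentiable (by simp)) p
  have h : HasFDerivAt (fun q => fderiv ℝ F q v)
      ((ContinuousLinearMap.apply ℝ ℝ v).comp (fderiv ℝ (fderiv ℝ F) p)) p :=
    (ContinuousLinearMap.apply ℝ ℝ v).hasFDerivAt.comp p hd.hasFDerivAt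
  rw [h.fderiv]; rfl

lemma clairaut (hF : ContDiff ℝ (⊤ : ℕ∞) F) (p v w : ℝ × ℝ) :
    fderiv ℝ (fun q => fderiv ℝ F q v) p w = fderiv ℝ (fun q => fderiv ℝ F q w) p v := by
  rw [fderiv_pd hF, fderiv_pd hF]
  exact ((hF.of_le (by rw [minSmoothness_of_isRCLikeNormedField]; exact WithTop.coe_le_coe.mpr le_top)).contDiffAt.isSymmSndFDerivAt le_rfl) w v

open MeasureTheory intervalIntegral in
lemma deriv_under_integral (hΦ : ContDiff ℝ (⊤ : ℕ∞) F) (a b t₀ : ℝ) :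
    HasDerivAt (fun t => ∫ x in a..b, F (x, t))
      (∫ x in a..b, fderiv ℝ F (x, t₀) (0, 1)) t₀ := by
  have hΦt : Continuous fun p : ℝ × ℝ => fderiv ℝ F p (0, 1) :=
    (pdSmooth hΦ (0, 1)).continuous
  have hK : IsCompact ((Set.uIcc a b) ×ˢ Metric.closedBall t₀ 1) :=
    isCompact_uIcc.prod (isCompact_closedBall _ _)
  obtain ⟨C, hC⟩ := hK.exists_bound_of_continuousOn hΦt.continuousOn
  have main := hasDerivAt_integral_of_dominated_loc_of_deriv_le (F := fun t x => F (x, t))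
    (F' := fun t x => fderiv ℝ F (x, t) (0, 1)) (bound := fun _ => C)
    (μ := volume) (a := a) (b := b) (x₀ := t₀) (s := Metric.ball t₀ 1) (Metric.ball_mem_nhds t₀ one_pos)
    (Filter.Eventually.of_forall fun s =>
      ((hΦ.continuous.comp (continuous_id.prodMk continuous_const)).aestronglyMeasurable))
    ((hΦ.continuous.comp (continuous_id.prodMk continuous_const)).intervalIntegrable _ _)
    ((hΦt.comp (continuous_id.prodMk continuous_const)).aestronglyMeasurable)
    (Filter.Eventually.of_forall fun x hx s hs =>
      hC (x, s) ⟨Set.uIoc_subset_uIcc hx, Metric.ball_subset_closedBall hs⟩)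
    intervalIntegrable_const
    (Filter.Eventually.of_forall fun x _ s _ => sliceT hΦ x s)
  exact main.2

end helpers

noncomputable def px (F : ℝ × ℝ → ℝ) : ℝ × ℝ → ℝ := fun p => fderiv ℝ F p (1, 0)
noncomputable def pt (F : ℝ × ℝ → ℝ) : ℝ × ℝ → ℝ := fun p => fderiv ℝ F p (0, 1)

lemma pt_apply (F : ℝ × ℝ → ℝ) (p : ℝ × ℝ) : fderiv ℝ F p (0, 1) = pt F p := rfl

lemma px_smooth {F : ℝ × ℝ → ℝ} (hF : ContDiff ℝ (⊤ : ℕ∞) F) : ContDiff ℝ (⊤ : ℕ∞) (px F) := pdSmooth hF _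
lemma pt_smooth {F : ℝ × ℝ → ℝ} (hF : ContDiff ℝ (⊤ : ℕ∞) F) : ContDiff ℝ (⊤ : ℕ∞) (pt F) := pdSmooth hF _

lemma sliceX' {F : ℝ × ℝ → ℝ} (hF : ContDiff ℝ (⊤ : ℕ∞) F) (x t : ℝ) :
    HasDerivAt (fun x' => F (x', t)) (px F (x, t)) x := sliceX hF x t
lemma sliceT' {F : ℝ × ℝ → ℝ} (hF : ContDiff ℝ (⊤ : ℕ∞) F) (x t : ℝ) :
    HasDerivAt (fun s => F (x, s)) (pt F (x, t)) t := sliceT hF x t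

lemma clairaut' {F : ℝ × ℝ → ℝ} (hF : ContDiff ℝ (⊤ : ℕ∞) F) (p : ℝ × ℝ) :
    pt (px F) p = px (pt F) p := clairaut hF p (1, 0) (0, 1)

/-- translation invariance of the derivative of a periodic function -/
lemma periodic_fderiv {F : ℝ × ℝ → ℝ} (hF : ContDiff ℝ (⊤ : ℕ∞) F) {c : ℝ}
    (hp : ∀ p : ℝ × ℝ, F (p + (c, 0)) = F p) (p v : ℝ × ℝ) :
    fderiv ℝ F (p + (c, 0)) v = fderiv ℝ F p v := by
  have h1 : HasFDerivAt F (fderiv ℝ F (p + (c, 0))) (p + (c, 0)) :=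
    (hF.differentiable (by simp) _).hasFDerivAt
  have h2 : HasFDerivAt (fun q : ℝ × ℝ => F (q + (c, 0)))
      ((fderiv ℝ F (p + (c, 0))).comp (ContinuousLinearMap.id ℝ (ℝ × ℝ))) p :=
    h1.comp p ((hasFDerivAt_id p).add_const (c, 0))
  rw [show (fun q : ℝ × ℝ => F (q + (c, 0))) = F from funext hp] at h2
  rw [h2.fderiv]; rfl

lemma pdx_one {f : ℝ → ℝ → ℝ} (hf : ContDiff ℝ (⊤ : ℕ∞) (Function.uncurry f)) (x t : ℝ) :
    pdx 1 f x t = px (Function.uncurry f) (x, t) := by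
  rw [pdx, iteratedDeriv_one]
  exact (sliceX' hf x t).deriv

lemma pdx_two {f : ℝ → ℝ → ℝ} (hf : ContDiff ℝ (⊤ : ℕ∞) (Function.uncurry f)) (x t : ℝ) :
    pdx 2 f x t = px (px (Function.uncurry f)) (x, t) := by
  rw [pdx, iteratedDeriv_succ, iteratedDeriv_one]
  have h : (deriv fun x' => f x' t) = fun x' => px (Function.uncurry f) (x', t) :=
    funext fun x' => (sliceX' hf x' t).deriv
  rw [h]
  exact (sliceX' (px_smooth hf) x t).deriv

/-- The symplectic integrand. -/
noncomputable def Phi (u y z : ℝ → ℝ → ℝ) : ℝ × ℝ → ℝ := fun p =>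
  Function.uncurry y p * pt (Function.uncurry z) p
    - pt (Function.uncurry y) p * Function.uncurry z p
    + 2 * Function.uncurry u p *
      (Function.uncurry y p * px (Function.uncurry z) p
        - px (Function.uncurry y) p * Function.uncurry z p)

/-- The flux. -/
noncomputable def Gg (u y z : ℝ → ℝ → ℝ) : ℝ × ℝ → ℝ := fun p =>
  -3 * (Function.uncurry u p) ^ 2 *
      (Function.uncurry y p * px (Function.uncurry z) p
        - px (Function.uncurry y) p * Function.uncurry z p)
    - 2 * Function.uncurry u p *
      (Function.uncurry y p * pt (Function.uncurry z) p
        - pt (Function.uncurry y) p * Function.uncurry z p)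

/-- Along a periodic solution `u` of Burgers' equation `u_t = -3u_x u`,
the symplectic pairing `σ(y,z) = ∫ (yz_t - y_t z + 2u(yz_x - y_x z))` of two solutions
`y, z` of the Jacobi equation `y_tt = -3u²y_xx - 4uy_tx - 2u_x y_t` is constant in `t`. -/
theorem stmt16 (u ut y yt ytt z zt ztt : ℝ → ℝ → ℝ)
    (hu : ContDiff ℝ (⊤ : ℕ∞) (Function.uncurry u))
    (hy : ContDiff ℝ (⊤ : ℕ∞) (Function.uncurry y))
    (hz : ContDiff ℝ (⊤ : ℕ∞) (Function.uncurry z))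
    (hup : ∀ t, Function.Periodic (fun x => u x t) (2 * π))
    (hyp : ∀ t, Function.Periodic (fun x => y x t) (2 * π))
    (hzp : ∀ t, Function.Periodic (fun x => z x t) (2 * π))
    (hut : ∀ x t, HasDerivAt (fun s => u x s) (ut x t) t)
    (hyt : ∀ x t, HasDerivAt (fun s => y x s) (yt x t) t)
    (hytt : ∀ x t, HasDerivAt (fun s => yt x s) (ytt x t) t)
    (hzt : ∀ x t, HasDerivAt (fun s => z x s) (zt x t) t)
    (hztt : ∀ x t, HasDerivAt (fun s => zt x s) (ztt x t) t)
    (hBurgers : ∀ x t, ut x t = -3 * pdx 1 u x t * u x t)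
    (hJacy : ∀ x t, ytt x t
      = -3 * (u x t) ^ 2 * pdx 2 y x t - 4 * u x t * pdx 1 yt x t - 2 * pdx 1 u x t * yt x t)
    (hJacz : ∀ x t, ztt x t
      = -3 * (u x t) ^ 2 * pdx 2 z x t - 4 * u x t * pdx 1 zt x t - 2 * pdx 1 u x t * zt x t) :
    ∀ t₁ t₂ : ℝ,
      (∫ x in (0:ℝ)..(2 * π),
        (y x t₁ * zt x t₁ - yt x t₁ * z x t₁
          + 2 * u x t₁ * (y x t₁ * pdx 1 z x t₁ - pdx 1 y x t₁ * z x t₁)))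
      = ∫ x in (0:ℝ)..(2 * π),
        (y x t₂ * zt x t₂ - yt x t₂ * z x t₂
          + 2 * u x t₂ * (y x t₂ * pdx 1 z x t₂ - pdx 1 y x t₂ * z x t₂)) := by
  intro t₁ t₂
  -- smoothness of the integrand and the flux
  have hΦ : ContDiff ℝ (⊤ : ℕ∞) (Phi u y z) :=
    ((hy.mul (pt_smooth hz)).sub ((pt_smooth hy).mul hz)).add
      ((contDiff_const.mul hu).mul ((hy.mul (px_smooth hz)).sub ((px_smooth hy).mul hz)))
  have hG : ContDiff ℝ (⊤ : ℕ∞) (Gg u y z) :=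
    ((contDiff_const.mul (hu.pow 2)).mul ((hy.mul (px_smooth hz)).sub ((px_smooth hy).mul hz))).sub
      ((contDiff_const.mul hu).mul ((hy.mul (pt_smooth hz)).sub ((pt_smooth hy).mul hz)))
  -- identifications of the given time derivatives with fderiv-based ones
  have huTid : ∀ x t, ut x t = pt (Function.uncurry u) (x, t) :=
    fun x t => (hut x t).unique (sliceT' hu x t)
  have hyTid : ∀ x t, yt x t = pt (Function.uncurry y) (x, t) :=
    fun x t => (hyt x t).unique (sliceT' hy x t)
  have hzTid : ∀ x t, zt x t = pt (Function.uncurry z) (x, t) :=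
    fun x t => (hzt x t).unique (sliceT' hz x t)
  have hyttid : ∀ x t, ytt x t = pt (pt (Function.uncurry y)) (x, t) := by
    intro x t
    have h2 : (fun s => yt x s) = fun s => pt (Function.uncurry y) (x, s) :=
      funext fun s => hyTid x s
    exact (h2 ▸ hytt x t).unique (sliceT' (pt_smooth hy) x t)
  have hzttid : ∀ x t, ztt x t = pt (pt (Function.uncurry z)) (x, t) := by
    intro x t
    have h2 : (fun s => zt x s) = fun s => pt (Function.uncurry z) (x, s) :=
      funext fun s => hzTid x s
    exact (h2 ▸ hztt x t).unique (sliceT' (pt_smooth hz) x t)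
  have pdx1yt : ∀ x t, pdx 1 yt x t = px (pt (Function.uncurry y)) (x, t) := by
    intro x t
    rw [pdx, iteratedDeriv_one,
      show (fun x' => yt x' t) = fun x' => pt (Function.uncurry y) (x', t) from
        funext fun x' => hyTid x' t]
    exact (sliceX' (pt_smooth hy) x t).deriv
  have pdx1zt : ∀ x t, pdx 1 zt x t = px (pt (Function.uncurry z)) (x, t) := by
    intro x t
    rw [pdx, iteratedDeriv_one,
      show (fun x' => zt x' t) = fun x' => pt (Function.uncurry z) (x', t) from
        funext fun x' => hzTid x' t]
    exact (sliceX' (pt_smooth hz) x t).deriv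
  -- the PDEs in fderiv form
  have hB : ∀ x t, pt (Function.uncurry u) (x, t)
      = -3 * px (Function.uncurry u) (x, t) * Function.uncurry u (x, t) := by
    intro x t
    rw [← huTid x t, ← pdx_one hu]
    exact hBurgers x t
  have hJy : ∀ x t, pt (pt (Function.uncurry y)) (x, t)
      = -3 * (Function.uncurry u (x, t)) ^ 2 * px (px (Function.uncurry y)) (x, t)
        - 4 * Function.uncurry u (x, t) * px (pt (Function.uncurry y)) (x, t)
        - 2 * px (Function.uncurry u) (x, t) * pt (Function.uncurry y) (x, t) := by
    intro x t
    rw [← hyttid x t, ← pdx_two hy, ← pdx1yt x t, ← pdx_one hu, ← hyTid x t]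
    exact hJacy x t
  have hJz : ∀ x t, pt (pt (Function.uncurry z)) (x, t)
      = -3 * (Function.uncurry u (x, t)) ^ 2 * px (px (Function.uncurry z)) (x, t)
        - 4 * Function.uncurry u (x, t) * px (pt (Function.uncurry z)) (x, t)
        - 2 * px (Function.uncurry u) (x, t) * pt (Function.uncurry z) (x, t) := by
    intro x t
    rw [← hzttid x t, ← pdx_two hz, ← pdx1zt x t, ← pdx_one hu, ← hzTid x t]
    exact hJacz x t
  -- key pointwise identity: ∂ₜ Phi = ∂ₓ Gg
  have key : ∀ x t, pt (Phi u y z) (x, t) = px (Gg u y z) (x, t) := by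
    intro x t
    have hΦcomp := (((sliceT' hy x t).mul (sliceT' (pt_smooth hz) x t)).sub
        ((sliceT' (pt_smooth hy) x t).mul (sliceT' hz x t))).add
      ((((sliceT' hu x t).const_mul (2:ℝ)).mul
        (((sliceT' hy x t).mul (sliceT' (px_smooth hz) x t)).sub
          ((sliceT' (px_smooth hy) x t).mul (sliceT' hz x t)))))
    have e1 := hΦcomp.unique (sliceT' hΦ x t)
    have hGcomp := ((((sliceX' hu x t).pow 2).const_mul (-3 : ℝ)).mul
        (((sliceX' hy x t).mul (sliceX' (px_smooth hz) x t)).sub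
          ((sliceX' (px_smooth hy) x t).mul (sliceX' hz x t)))).sub
      ((((sliceX' hu x t).const_mul (2:ℝ)).mul
        (((sliceX' hy x t).mul (sliceX' (pt_smooth hz) x t)).sub
          ((sliceX' (pt_smooth hy) x t).mul (sliceX' hz x t)))))
    have e2 := hGcomp.unique (sliceX' hG x t)
    rw [← e1, ← e2, hJy x t, hJz x t, hB x t, clairaut' hy (x, t), clairaut' hz (x, t)]
    simp only [Pi.pow_apply, Pi.mul_apply, Pi.sub_apply]
    ring
  -- periodicity
  have hUper : ∀ p : ℝ × ℝ, Function.uncurry u (p + (2 * π, 0)) = Function.uncurry u p := by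
    intro p
    show u (p.1 + 2 * π) (p.2 + 0) = u p.1 p.2
    rw [add_zero]; exact hup p.2 p.1
  have hYper : ∀ p : ℝ × ℝ, Function.uncurry y (p + (2 * π, 0)) = Function.uncurry y p := by
    intro p
    show y (p.1 + 2 * π) (p.2 + 0) = y p.1 p.2
    rw [add_zero]; exact hyp p.2 p.1
  have hZper : ∀ p : ℝ × ℝ, Function.uncurry z (p + (2 * π, 0)) = Function.uncurry z p := by
    intro p
    show z (p.1 + 2 * π) (p.2 + 0) = z p.1 p.2
    rw [add_zero]; exact hzp p.2 p.1
  have hGper : ∀ p : ℝ × ℝ, Gg u y z (p + (2 * π, 0)) = Gg u y z p := by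
    intro p
    simp only [Gg, px, pt]
    rw [hUper p, hYper p, hZper p, periodic_fderiv hy hYper p (1, 0),
      periodic_fderiv hz hZper p (1, 0), periodic_fderiv hy hYper p (0, 1),
      periodic_fderiv hz hZper p (0, 1)]
  -- the t-derivative of σ vanishes
  have hint0 : ∀ s : ℝ, (∫ x in (0:ℝ)..(2 * π), fderiv ℝ (Phi u y z) (x, s) (0, 1)) = 0 := by
    intro s
    have hcont : Continuous fun x : ℝ => px (Gg u y z) (x, s) :=
      (px_smooth hG).continuous.comp (continuous_id.prodMk continuous_const)
    have h1 : (∫ x in (0:ℝ)..(2 * π), fderiv ℝ (Phi u y z) (x, s) (0, 1))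
        = ∫ x in (0:ℝ)..(2 * π), px (Gg u y z) (x, s) := by
      simp only [pt_apply, key]
    have h2 : (∫ x in (0:ℝ)..(2 * π), px (Gg u y z) (x, s))
        = Gg u y z (2 * π, s) - Gg u y z (0, s) :=
      intervalIntegral.integral_eq_sub_of_hasDerivAt (fun x _ => sliceX' hG x s)
        (hcont.intervalIntegrable _ _)
    have h3 : Gg u y z (2 * π, s) = Gg u y z (0, s) := by
      have hpt : ((0:ℝ), s) + (2 * π, 0) = ((2 * π : ℝ), s) := by
        simp [Prod.ext_iff]
      rw [← hpt, hGper]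
    rw [h1, h2, h3, sub_self]
  have hσ : ∀ s : ℝ, HasDerivAt (fun t => ∫ x in (0:ℝ)..(2 * π), Phi u y z (x, t)) 0 s := by
    intro s
    have h := deriv_under_integral hΦ 0 (2 * π) s
    rwa [hint0 s] at h
  have hconst : (∫ x in (0:ℝ)..(2 * π), Phi u y z (x, t₁))
      = ∫ x in (0:ℝ)..(2 * π), Phi u y z (x, t₂) :=
    is_const_of_deriv_eq_zero (fun s => (hσ s).differentiableAt) (fun s => (hσ s).deriv) t₁ t₂
  -- rewrite the goal integrals as integrals of Phi
  have hshape : ∀ t : ℝ,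
      (∫ x in (0:ℝ)..(2 * π),
        (y x t * zt x t - yt x t * z x t
          + 2 * u x t * (y x t * pdx 1 z x t - pdx 1 y x t * z x t)))
      = ∫ x in (0:ℝ)..(2 * π), Phi u y z (x, t) := by
    intro t
    apply intervalIntegral.integral_congr
    intro x _
    show y x t * zt x t - yt x t * z x t
        + 2 * u x t * (y x t * pdx 1 z x t - pdx 1 y x t * z x t) = Phi u y z (x, t)
    rw [hzTid x t, hyTid x t, pdx_one hz, pdx_one hy]
    rfl
  rw [hshape t₁, hshape t₂, hconst]
end

section
/- For smooth 2π-periodic functions u, y with u solving KdV u_t = -3u u_x - a u_xxx (a constant) and y solving the Virasoro Jacobi equation 5.3(5) with constant B₁, and similarly z with constant C₁, the pairing σ((y,b),(z,c)) = ∫_{S¹}(y z_t - y_t z + 2u(y z_x - y_x z)) dx + bC₁ - cB₁ - a∫_{S¹} y' z'' dx is constant in t. -/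
open Real

namespace Stmt17Aux
open Function


/-- partial derivative in first variable -/
noncomputable def px (f : ℝ → ℝ → ℝ) : ℝ → ℝ → ℝ :=
  fun x t => fderiv ℝ (uncurry f) (x, t) (1, 0)

/-- partial derivative in second variable -/
noncomputable def pt (f : ℝ → ℝ → ℝ) : ℝ → ℝ → ℝ :=
  fun x t => fderiv ℝ (uncurry f) (x, t) (0, 1)

variable {f g : ℝ → ℝ → ℝ}

lemma hasDerivAt_x (hf : ContDiff ℝ (⊤ : ℕ∞) (uncurry f)) (x t : ℝ) :
    HasDerivAt (fun x' => f x' t) (px f x t) x := by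
  have h1 : HasDerivAt (fun x' : ℝ => (x', t)) ((1:ℝ), (0:ℝ)) x :=
    (hasDerivAt_id x).prodMk (hasDerivAt_const x t)
  have h2 : HasFDerivAt (uncurry f) (fderiv ℝ (uncurry f) (x, t)) (x, t) :=
    (hf.differentiable (by simp) (x, t)).hasFDerivAt
  exact h2.comp_hasDerivAt x h1

lemma hasDerivAt_t (hf : ContDiff ℝ (⊤ : ℕ∞) (uncurry f)) (x t : ℝ) :
    HasDerivAt (fun s => f x s) (pt f x t) t := by
  have h1 : HasDerivAt (fun s : ℝ => (x, s)) ((0:ℝ), (1:ℝ)) t :=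
    (hasDerivAt_const t x).prodMk (hasDerivAt_id t)
  have h2 : HasFDerivAt (uncurry f) (fderiv ℝ (uncurry f) (x, t)) (x, t) :=
    (hf.differentiable (by simp) (x, t)).hasFDerivAt
  exact h2.comp_hasDerivAt t h1

lemma contDiff_px (hf : ContDiff ℝ (⊤ : ℕ∞) (uncurry f)) : ContDiff ℝ (⊤ : ℕ∞) (uncurry (px f)) := by
  exact (hf.fderiv_right (by simp)).clm_apply contDiff_const

lemma contDiff_pt (hf : ContDiff ℝ (⊤ : ℕ∞) (uncurry f)) : ContDiff ℝ (⊤ : ℕ∞) (uncurry (pt f)) := by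
  exact (hf.fderiv_right (by simp)).clm_apply contDiff_const

lemma pt_px_comm (hf : ContDiff ℝ (⊤ : ℕ∞) (uncurry f)) (x t : ℝ) :
    pt (px f) x t = px (pt f) x t := by
  set F := uncurry f with hF
  have hdF : Differentiable ℝ F := hf.differentiable (by simp)
  have hdF2 : Differentiable ℝ (fderiv ℝ F) :=
    (hf.fderiv_right (m := (⊤ : ℕ∞)) ((by simp))).differentiable (by simp)
  have key : ∀ v w : ℝ × ℝ,
      fderiv ℝ (fderiv ℝ F) (x, t) v w = fderiv ℝ (fderiv ℝ F) (x, t) w v := by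
    intro v w
    exact second_derivative_symmetric (fun p => (hdF p).hasFDerivAt)
      (hdF2 (x, t)).hasFDerivAt v w
  have e1 : pt (px f) x t = fderiv ℝ (fderiv ℝ F) (x, t) (0, 1) (1, 0) := by
    have : uncurry (px f) = fun p : ℝ × ℝ => fderiv ℝ F p (1, 0) := by
      funext p; simp [uncurry, px]; rfl
    rw [pt, this, fderiv_clm_apply (hdF2 (x, t)) (differentiableAt_const _)]
    simp
  have e2 : px (pt f) x t = fderiv ℝ (fderiv ℝ F) (x, t) (1, 0) (0, 1) := by
    have : uncurry (pt f) = fun p : ℝ × ℝ => fderiv ℝ F p (0, 1) := by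
      funext p; simp [uncurry, pt]; rfl
    rw [px, this, fderiv_clm_apply (hdF2 (x, t)) (differentiableAt_const _)]
    simp
  rw [e1, e2, key]

lemma pdx_zero' (f : ℝ → ℝ → ℝ) : pdx 0 f = f := by
  funext x t; simp [pdx, iteratedDeriv_zero]

lemma pdx_succ'' (f : ℝ → ℝ → ℝ) (n : ℕ) (x t : ℝ) :
    pdx (n+1) f x t = pdx n (fun x' t' => deriv (fun x'' => f x'' t') x') x t := by
  simp only [pdx, iteratedDeriv_succ']

lemma deriv_slice_eq_px (hf : ContDiff ℝ (⊤ : ℕ∞) (uncurry f)) (t : ℝ) :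
    (fun x' => deriv (fun x'' => f x'' t) x') = fun x' => px f x' t := by
  funext x'; exact (hasDerivAt_x hf x' t).deriv

lemma pdx_succ_px (hf : ContDiff ℝ (⊤ : ℕ∞) (uncurry f)) (n : ℕ) (x t : ℝ) :
    pdx (n+1) f x t = pdx n (px f) x t := by
  rw [pdx_succ'' f n x t]
  congr 1
  funext x' t'
  exact congrFun (deriv_slice_eq_px hf t') x'

lemma contDiff_pdx (hf : ContDiff ℝ (⊤ : ℕ∞) (uncurry f)) (n : ℕ) :
    ContDiff ℝ (⊤ : ℕ∞) (uncurry (pdx n f)) := by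
  induction n generalizing f with
  | zero => rw [pdx_zero']; exact hf
  | succ n ih =>
    have h := ih (contDiff_px hf)
    have e : uncurry (pdx (n+1) f) = uncurry (pdx n (px f)) := by
      funext p
      exact pdx_succ_px hf n p.1 p.2
    rw [e]; exact h

lemma hasDerivAt_pdx_x (hf : ContDiff ℝ (⊤ : ℕ∞) (uncurry f)) (n : ℕ) (x t : ℝ) :
    HasDerivAt (fun x' => pdx n f x' t) (pdx (n+1) f x t) x := by
  have h := hasDerivAt_x (contDiff_pdx hf n) x t
  have e : pdx (n+1) f x t = px (pdx n f) x t := by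
    have h2 := hasDerivAt_x (contDiff_pdx hf n) x t
    have : pdx (n+1) f x t = deriv (fun x' => pdx n f x' t) x := by
      simp only [pdx, iteratedDeriv_succ]
    rw [this, h2.deriv]
  rw [e]; exact h

lemma pt_eq (hf : ContDiff ℝ (⊤ : ℕ∞) (uncurry f))
    (hg : ∀ x t, HasDerivAt (fun s => f x s) (g x t) t) : g = pt f := by
  funext x t
  exact ((hg x t).unique (hasDerivAt_t hf x t))

lemma hasDerivAt_pdx_t (hf : ContDiff ℝ (⊤ : ℕ∞) (uncurry f))
    (hg : ∀ x' t', HasDerivAt (fun s => f x' s) (g x' t') t') (n : ℕ) (x t : ℝ) :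
    HasDerivAt (fun s => pdx n f x s) (pdx n g x t) t := by
  induction n generalizing f g with
  | zero => rw [pdx_zero', pdx_zero']; exact hg x t
  | succ n ih =>
    have hgpt : g = pt f := pt_eq hf hg
    have hgc : ContDiff ℝ (⊤ : ℕ∞) (uncurry g) := hgpt ▸ contDiff_pt hf
    have hpxf : ContDiff ℝ (⊤ : ℕ∞) (uncurry (px f)) := contDiff_px hf
    have hcomm : ∀ x' t', HasDerivAt (fun s => px f x' s) (px g x' t') t' := by
      intro x' t'
      have h := hasDerivAt_t hpxf x' t'
      have : pt (px f) x' t' = px g x' t' := by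
        rw [pt_px_comm hf x' t', hgpt]
      rwa [this] at h
    have key := ih hpxf hcomm
    have e1 : (fun s => pdx (n+1) f x s) = fun s => pdx n (px f) x s := by
      funext s; exact pdx_succ_px hf n x s
    have e2 : pdx (n+1) g x t = pdx n (px g) x t := pdx_succ_px hgc n x t
    rw [e1, e2]; exact key

lemma periodic_deriv {h : ℝ → ℝ} {c : ℝ} (hp : Function.Periodic h c) :
    Function.Periodic (deriv h) c := by
  intro x
  have : (fun y => h (y + c)) = h := funext fun y => hp y
  rw [← deriv_comp_add_const (f := h) (a := c) (x := x), this]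

lemma pdx_periodic {c : ℝ} (n : ℕ) (t : ℝ) (hp : Function.Periodic (fun x => f x t) c) :
    Function.Periodic (fun x => pdx n f x t) c := by
  induction n with
  | zero => simpa [pdx, iteratedDeriv_zero] using hp
  | succ n ih =>
    have : (fun x => pdx (n+1) f x t) = deriv (fun x => pdx n f x t) := by
      funext x; simp only [pdx, iteratedDeriv_succ]
    rw [this]; exact periodic_deriv ih

lemma continuous_pdx_slice_x (hf : ContDiff ℝ (⊤ : ℕ∞) (uncurry f)) (n : ℕ) (t : ℝ) :
    Continuous (fun x => pdx n f x t) := by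
  have := (contDiff_pdx hf n).continuous
  exact this.comp (continuous_id.prodMk continuous_const)


end Stmt17Aux

open Stmt17Aux Function

/-- Along a periodic solution `u` of KdV `u_t = -3uu_x - au_xxx` and two
solutions `(y,b)`, `(z,c)` of the Virasoro Jacobi equation with constants `B₁`, `C₁`,
the pairing `σ((y,b),(z,c)) = ∫(yz_t - y_t z + 2u(yz_x - y_x z)) + bC₁ - cB₁ - a∫y'z''`
is constant in `t`. -/
theorem stmt17 (a B₁ C₁ : ℝ) (u ut y yt ytt z zt ztt : ℝ → ℝ → ℝ) (b bt c ct : ℝ → ℝ)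
    (hu : ContDiff ℝ (⊤ : ℕ∞) (Function.uncurry u))
    (hy : ContDiff ℝ (⊤ : ℕ∞) (Function.uncurry y))
    (hz : ContDiff ℝ (⊤ : ℕ∞) (Function.uncurry z))
    (hup : ∀ t, Function.Periodic (fun x => u x t) (2 * π))
    (hyp : ∀ t, Function.Periodic (fun x => y x t) (2 * π))
    (hzp : ∀ t, Function.Periodic (fun x => z x t) (2 * π))
    (hut : ∀ x t, HasDerivAt (fun s => u x s) (ut x t) t)
    (hyt : ∀ x t, HasDerivAt (fun s => y x s) (yt x t) t)
    (hytt : ∀ x t, HasDerivAt (fun s => yt x s) (ytt x t) t)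
    (hzt : ∀ x t, HasDerivAt (fun s => z x s) (zt x t) t)
    (hztt : ∀ x t, HasDerivAt (fun s => zt x s) (ztt x t) t)
    (hbt : ∀ t, HasDerivAt b (bt t) t)
    (hct : ∀ t, HasDerivAt c (ct t) t)
    (hKdV : ∀ x t, ut x t = -3 * u x t * pdx 1 u x t - a * pdx 3 u x t)
    (hB₁ : ∀ t, bt t + (∫ x in (0:ℝ)..(2 * π), pdx 3 y x t * u x t) = B₁)
    (hC₁ : ∀ t, ct t + (∫ x in (0:ℝ)..(2 * π), pdx 3 z x t * u x t) = C₁)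
    (hJacy : ∀ x t, ytt x t
      = -u x t * (4 * pdx 1 yt x t + 3 * u x t * pdx 2 y x t + a * pdx 4 y x t)
        - pdx 1 u x t * (2 * yt x t + 2 * a * pdx 3 y x t)
        - pdx 3 u x t * (B₁ - 3 * a * pdx 1 y x t) - a * pdx 3 yt x t)
    (hJacz : ∀ x t, ztt x t
      = -u x t * (4 * pdx 1 zt x t + 3 * u x t * pdx 2 z x t + a * pdx 4 z x t)
        - pdx 1 u x t * (2 * zt x t + 2 * a * pdx 3 z x t)
        - pdx 3 u x t * (C₁ - 3 * a * pdx 1 z x t) - a * pdx 3 zt x t) :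
    ∀ t₁ t₂ : ℝ,
      ((∫ x in (0:ℝ)..(2 * π),
          (y x t₁ * zt x t₁ - yt x t₁ * z x t₁
            + 2 * u x t₁ * (y x t₁ * pdx 1 z x t₁ - pdx 1 y x t₁ * z x t₁)))
        + b t₁ * C₁ - c t₁ * B₁
        - a * ∫ x in (0:ℝ)..(2 * π), pdx 1 y x t₁ * pdx 2 z x t₁)
      = ((∫ x in (0:ℝ)..(2 * π),
          (y x t₂ * zt x t₂ - yt x t₂ * z x t₂
            + 2 * u x t₂ * (y x t₂ * pdx 1 z x t₂ - pdx 1 y x t₂ * z x t₂)))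
        + b t₂ * C₁ - c t₂ * B₁
        - a * ∫ x in (0:ℝ)..(2 * π), pdx 1 y x t₂ * pdx 2 z x t₂) := by
  intro t₁ t₂
  -- smoothness of the time-derivative functions
  have hutc : ContDiff ℝ (⊤ : ℕ∞) (Function.uncurry ut) := by
    rw [pt_eq hu hut]; exact contDiff_pt hu
  have hytc : ContDiff ℝ (⊤ : ℕ∞) (Function.uncurry yt) := by
    rw [pt_eq hy hyt]; exact contDiff_pt hy
  have hztc : ContDiff ℝ (⊤ : ℕ∞) (Function.uncurry zt) := by
    rw [pt_eq hz hzt]; exact contDiff_pt hz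
  have hyttc : ContDiff ℝ (⊤ : ℕ∞) (Function.uncurry ytt) := by
    rw [pt_eq hytc hytt]; exact contDiff_pt hytc
  have hzttc : ContDiff ℝ (⊤ : ℕ∞) (Function.uncurry ztt) := by
    rw [pt_eq hztc hztt]; exact contDiff_pt hztc
  -- x-derivative helpers
  have hx_u : ∀ (n : ℕ) (x t : ℝ), HasDerivAt (fun x' => pdx n u x' t) (pdx (n+1) u x t) x :=
    fun n x t => hasDerivAt_pdx_x hu n x t
  have hx_y : ∀ (n : ℕ) (x t : ℝ), HasDerivAt (fun x' => pdx n y x' t) (pdx (n+1) y x t) x :=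
    fun n x t => hasDerivAt_pdx_x hy n x t
  have hx_z : ∀ (n : ℕ) (x t : ℝ), HasDerivAt (fun x' => pdx n z x' t) (pdx (n+1) z x t) x :=
    fun n x t => hasDerivAt_pdx_x hz n x t
  have hx_yt : ∀ (n : ℕ) (x t : ℝ), HasDerivAt (fun x' => pdx n yt x' t) (pdx (n+1) yt x t) x :=
    fun n x t => hasDerivAt_pdx_x hytc n x t
  have hx_zt : ∀ (n : ℕ) (x t : ℝ), HasDerivAt (fun x' => pdx n zt x' t) (pdx (n+1) zt x t) x :=
    fun n x t => hasDerivAt_pdx_x hztc n x t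
  have hx0_u : ∀ (x t : ℝ), HasDerivAt (fun x' => u x' t) (pdx 1 u x t) x := fun x t => by
    have h := hx_u 0 x t; rwa [pdx_zero'] at h
  have hx0_y : ∀ (x t : ℝ), HasDerivAt (fun x' => y x' t) (pdx 1 y x t) x := fun x t => by
    have h := hx_y 0 x t; rwa [pdx_zero'] at h
  have hx0_z : ∀ (x t : ℝ), HasDerivAt (fun x' => z x' t) (pdx 1 z x t) x := fun x t => by
    have h := hx_z 0 x t; rwa [pdx_zero'] at h
  have hx0_yt : ∀ (x t : ℝ), HasDerivAt (fun x' => yt x' t) (pdx 1 yt x t) x := fun x t => by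
    have h := hx_yt 0 x t; rwa [pdx_zero'] at h
  have hx0_zt : ∀ (x t : ℝ), HasDerivAt (fun x' => zt x' t) (pdx 1 zt x t) x := fun x t => by
    have h := hx_zt 0 x t; rwa [pdx_zero'] at h
  -- t-derivative helpers
  have ht_u : ∀ (n : ℕ) (x t : ℝ), HasDerivAt (fun s => pdx n u x s) (pdx n ut x t) t :=
    fun n x t => hasDerivAt_pdx_t hu hut n x t
  have ht_y : ∀ (n : ℕ) (x t : ℝ), HasDerivAt (fun s => pdx n y x s) (pdx n yt x t) t :=
    fun n x t => hasDerivAt_pdx_t hy hyt n x t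
  have ht_z : ∀ (n : ℕ) (x t : ℝ), HasDerivAt (fun s => pdx n z x s) (pdx n zt x t) t :=
    fun n x t => hasDerivAt_pdx_t hz hzt n x t
  have ht_yt : ∀ (n : ℕ) (x t : ℝ), HasDerivAt (fun s => pdx n yt x s) (pdx n ytt x t) t :=
    fun n x t => hasDerivAt_pdx_t hytc hytt n x t
  have ht_zt : ∀ (n : ℕ) (x t : ℝ), HasDerivAt (fun s => pdx n zt x s) (pdx n ztt x t) t :=
    fun n x t => hasDerivAt_pdx_t hztc hztt n x t
  -- joint continuity helpers
  have c0_u : Continuous (fun q : ℝ × ℝ => u q.1 q.2) := hu.continuous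
  have c0_y : Continuous (fun q : ℝ × ℝ => y q.1 q.2) := hy.continuous
  have c0_z : Continuous (fun q : ℝ × ℝ => z q.1 q.2) := hz.continuous
  have c0_yt : Continuous (fun q : ℝ × ℝ => yt q.1 q.2) := hytc.continuous
  have c0_zt : Continuous (fun q : ℝ × ℝ => zt q.1 q.2) := hztc.continuous
  have c0_ut : Continuous (fun q : ℝ × ℝ => ut q.1 q.2) := hutc.continuous
  have c0_ytt : Continuous (fun q : ℝ × ℝ => ytt q.1 q.2) := hyttc.continuous
  have c0_ztt : Continuous (fun q : ℝ × ℝ => ztt q.1 q.2) := hzttc.continuous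
  have c_u : ∀ n : ℕ, Continuous (fun q : ℝ × ℝ => pdx n u q.1 q.2) :=
    fun n => (contDiff_pdx hu n).continuous
  have c_y : ∀ n : ℕ, Continuous (fun q : ℝ × ℝ => pdx n y q.1 q.2) :=
    fun n => (contDiff_pdx hy n).continuous
  have c_z : ∀ n : ℕ, Continuous (fun q : ℝ × ℝ => pdx n z q.1 q.2) :=
    fun n => (contDiff_pdx hz n).continuous
  have c_yt : ∀ n : ℕ, Continuous (fun q : ℝ × ℝ => pdx n yt q.1 q.2) :=
    fun n => (contDiff_pdx hytc n).continuous
  have c_zt : ∀ n : ℕ, Continuous (fun q : ℝ × ℝ => pdx n zt q.1 q.2) :=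
    fun n => (contDiff_pdx hztc n).continuous
  -- slice continuity helpers
  have s0_u : ∀ t : ℝ, Continuous (fun x => u x t) :=
    fun t => c0_u.comp (continuous_id.prodMk continuous_const)
  have s0_y : ∀ t : ℝ, Continuous (fun x => y x t) :=
    fun t => c0_y.comp (continuous_id.prodMk continuous_const)
  have s0_z : ∀ t : ℝ, Continuous (fun x => z x t) :=
    fun t => c0_z.comp (continuous_id.prodMk continuous_const)
  have s0_yt : ∀ t : ℝ, Continuous (fun x => yt x t) :=
    fun t => c0_yt.comp (continuous_id.prodMk continuous_const)
  have s0_zt : ∀ t : ℝ, Continuous (fun x => zt x t) :=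
    fun t => c0_zt.comp (continuous_id.prodMk continuous_const)
  have s_y : ∀ (n : ℕ) (t : ℝ), Continuous (fun x => pdx n y x t) :=
    fun n t => continuous_pdx_slice_x hy n t
  have s_z : ∀ (n : ℕ) (t : ℝ), Continuous (fun x => pdx n z x t) :=
    fun n t => continuous_pdx_slice_x hz n t
  -- joint continuity of G and Gt
  have cG : Continuous (fun q : ℝ × ℝ => ((((y q.1 q.2 * zt q.1 q.2) - (yt q.1 q.2 * z q.1 q.2)) + (((2) * u q.1 q.2) * ((y q.1 q.2 * pdx 1 z q.1 q.2) - (pdx 1 y q.1 q.2 * z q.1 q.2)))) - ((a) * (pdx 1 y q.1 q.2 * pdx 2 z q.1 q.2)))) := ((((c0_y.mul c0_zt).sub (c0_yt.mul c0_z)).add ((continuous_const.mul c0_u).mul ((c0_y.mul (c_z 1)).sub ((c_y 1).mul c0_z)))).sub (continuous_const.mul ((c_y 1).mul (c_z 2))))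
  have cGt : Continuous (fun q : ℝ × ℝ => (((((y q.1 q.2 * ztt q.1 q.2) - (ytt q.1 q.2 * z q.1 q.2)) + (((2) * ut q.1 q.2) * ((y q.1 q.2 * pdx 1 z q.1 q.2) - (pdx 1 y q.1 q.2 * z q.1 q.2)))) + (((2) * u q.1 q.2) * ((((yt q.1 q.2 * pdx 1 z q.1 q.2) + (y q.1 q.2 * pdx 1 zt q.1 q.2)) - (pdx 1 yt q.1 q.2 * z q.1 q.2)) - (pdx 1 y q.1 q.2 * zt q.1 q.2)))) - ((a) * ((pdx 1 yt q.1 q.2 * pdx 2 z q.1 q.2) + (pdx 1 y q.1 q.2 * pdx 2 zt q.1 q.2))))) := (((((c0_y.mul c0_ztt).sub (c0_ytt.mul c0_z)).add ((continuous_const.mul c0_ut).mul ((c0_y.mul (c_z 1)).sub ((c_y 1).mul c0_z)))).add ((continuous_const.mul c0_u).mul ((((c0_yt.mul (c_z 1)).add (c0_y.mul (c_zt 1))).sub ((c_yt 1).mul c0_z)).sub ((c_y 1).mul c0_zt)))).sub (continuous_const.mul (((c_yt 1).mul (c_z 2)).add ((c_y 1).mul (c_zt 2)))))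
  have cGx : ∀ s : ℝ, Continuous (fun x => ((((y x s * zt x s) - (yt x s * z x s)) + (((2) * u x s) * ((y x s * pdx 1 z x s) - (pdx 1 y x s * z x s)))) - ((a) * (pdx 1 y x s * pdx 2 z x s)))) :=
    fun s => cG.comp (continuous_id.prodMk continuous_const)
  have cGtx : ∀ s : ℝ, Continuous (fun x => (((((y x s * ztt x s) - (ytt x s * z x s)) + (((2) * ut x s) * ((y x s * pdx 1 z x s) - (pdx 1 y x s * z x s)))) + (((2) * u x s) * ((((yt x s * pdx 1 z x s) + (y x s * pdx 1 zt x s)) - (pdx 1 yt x s * z x s)) - (pdx 1 y x s * zt x s)))) - ((a) * ((pdx 1 yt x s * pdx 2 z x s) + (pdx 1 y x s * pdx 2 zt x s))))) :=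
    fun s => cGt.comp (continuous_id.prodMk continuous_const)
  -- Stage 1 : time derivative of the integrand
  have hGd : ∀ (x t : ℝ), HasDerivAt (fun s => ((((y x s * zt x s) - (yt x s * z x s)) + (((2) * u x s) * ((y x s * pdx 1 z x s) - (pdx 1 y x s * z x s)))) - ((a) * (pdx 1 y x s * pdx 2 z x s)))) (((((yt x t * zt x t + y x t * ztt x t) - (ytt x t * z x t + yt x t * zt x t)) + ((0 * u x t + (2) * ut x t) * ((y x t * pdx 1 z x t) - (pdx 1 y x t * z x t)) + ((2) * u x t) * ((yt x t * pdx 1 z x t + y x t * pdx 1 zt x t) - (pdx 1 yt x t * z x t + pdx 1 y x t * zt x t)))) - (0 * (pdx 1 y x t * pdx 2 z x t) + (a) * (pdx 1 yt x t * pdx 2 z x t + pdx 1 y x t * pdx 2 zt x t)))) t :=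
    fun x t => (((((hyt x t).mul (hztt x t)).sub ((hytt x t).mul (hzt x t))).add (((hasDerivAt_const t (2)).mul (hut x t)).mul (((hyt x t).mul (ht_z 1 x t)).sub ((ht_y 1 x t).mul (hzt x t))))).sub ((hasDerivAt_const t (a)).mul ((ht_y 1 x t).mul (ht_z 2 x t))))
  have hGd' : ∀ (x t : ℝ), HasDerivAt (fun s => ((((y x s * zt x s) - (yt x s * z x s)) + (((2) * u x s) * ((y x s * pdx 1 z x s) - (pdx 1 y x s * z x s)))) - ((a) * (pdx 1 y x s * pdx 2 z x s)))) ((((((y x t * ztt x t) - (ytt x t * z x t)) + (((2) * ut x t) * ((y x t * pdx 1 z x t) - (pdx 1 y x t * z x t)))) + (((2) * u x t) * ((((yt x t * pdx 1 z x t) + (y x t * pdx 1 zt x t)) - (pdx 1 yt x t * z x t)) - (pdx 1 y x t * zt x t)))) - ((a) * ((pdx 1 yt x t * pdx 2 z x t) + (pdx 1 y x t * pdx 2 zt x t))))) t := fun x t => by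
    have h := hGd x t
    convert h using 1
    ring
  -- Stage 2 : differentiation under the integral sign
  have hInt : ∀ t : ℝ, HasDerivAt (fun s => ∫ x in (0:ℝ)..(2 * π), ((((y x s * zt x s) - (yt x s * z x s)) + (((2) * u x s) * ((y x s * pdx 1 z x s) - (pdx 1 y x s * z x s)))) - ((a) * (pdx 1 y x s * pdx 2 z x s))))
      (∫ x in (0:ℝ)..(2 * π), (((((y x t * ztt x t) - (ytt x t * z x t)) + (((2) * ut x t) * ((y x t * pdx 1 z x t) - (pdx 1 y x t * z x t)))) + (((2) * u x t) * ((((yt x t * pdx 1 z x t) + (y x t * pdx 1 zt x t)) - (pdx 1 yt x t * z x t)) - (pdx 1 y x t * zt x t)))) - ((a) * ((pdx 1 yt x t * pdx 2 z x t) + (pdx 1 y x t * pdx 2 zt x t))))) t := by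
    intro t
    have hcpt : IsCompact ((Set.uIcc (0:ℝ) (2 * π)) ×ˢ (Set.Icc (t - 1) (t + 1))) :=
      isCompact_uIcc.prod isCompact_Icc
    obtain ⟨M, hM⟩ := hcpt.exists_bound_of_continuousOn cGt.continuousOn
    have h1 : ∀ᶠ s in nhds t, MeasureTheory.AEStronglyMeasurable (fun x => ((((y x s * zt x s) - (yt x s * z x s)) + (((2) * u x s) * ((y x s * pdx 1 z x s) - (pdx 1 y x s * z x s)))) - ((a) * (pdx 1 y x s * pdx 2 z x s))))
        (MeasureTheory.volume.restrict (Set.uIoc (0:ℝ) (2 * π))) :=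
      Filter.Eventually.of_forall fun s => (cGx s).aestronglyMeasurable
    have h2 : IntervalIntegrable (fun x => ((((y x t * zt x t) - (yt x t * z x t)) + (((2) * u x t) * ((y x t * pdx 1 z x t) - (pdx 1 y x t * z x t)))) - ((a) * (pdx 1 y x t * pdx 2 z x t)))) MeasureTheory.volume 0 (2 * π) :=
      (cGx t).intervalIntegrable _ _
    have h3 : MeasureTheory.AEStronglyMeasurable (fun x => (((((y x t * ztt x t) - (ytt x t * z x t)) + (((2) * ut x t) * ((y x t * pdx 1 z x t) - (pdx 1 y x t * z x t)))) + (((2) * u x t) * ((((yt x t * pdx 1 z x t) + (y x t * pdx 1 zt x t)) - (pdx 1 yt x t * z x t)) - (pdx 1 y x t * zt x t)))) - ((a) * ((pdx 1 yt x t * pdx 2 z x t) + (pdx 1 y x t * pdx 2 zt x t)))))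
        (MeasureTheory.volume.restrict (Set.uIoc (0:ℝ) (2 * π))) :=
      (cGtx t).aestronglyMeasurable
    have h4 : ∀ᵐ x ∂(MeasureTheory.volume), x ∈ Set.uIoc (0:ℝ) (2 * π) →
        ∀ s ∈ Metric.ball t 1, ‖(((((y x s * ztt x s) - (ytt x s * z x s)) + (((2) * ut x s) * ((y x s * pdx 1 z x s) - (pdx 1 y x s * z x s)))) + (((2) * u x s) * ((((yt x s * pdx 1 z x s) + (y x s * pdx 1 zt x s)) - (pdx 1 yt x s * z x s)) - (pdx 1 y x s * zt x s)))) - ((a) * ((pdx 1 yt x s * pdx 2 z x s) + (pdx 1 y x s * pdx 2 zt x s))))‖ ≤ M := by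
      refine Filter.Eventually.of_forall fun x hx s hs => ?_
      have hmem : (x, s) ∈ (Set.uIcc (0:ℝ) (2 * π)) ×ˢ (Set.Icc (t - 1) (t + 1)) := by
        refine ⟨Set.uIoc_subset_uIcc hx, ?_⟩
        have hd := Metric.mem_ball.1 hs
        rw [Real.dist_eq] at hd
        have := abs_lt.1 hd
        exact Set.mem_Icc.2 ⟨by linarith [this.1], by linarith [this.2]⟩
      simpa using hM (x, s) hmem
    have h5 : IntervalIntegrable (fun _ : ℝ => M) MeasureTheory.volume 0 (2 * π) :=
      intervalIntegrable_const
    have h6 : ∀ᵐ x ∂(MeasureTheory.volume), x ∈ Set.uIoc (0:ℝ) (2 * π) →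
        ∀ s ∈ Metric.ball t 1, HasDerivAt (fun s => ((((y x s * zt x s) - (yt x s * z x s)) + (((2) * u x s) * ((y x s * pdx 1 z x s) - (pdx 1 y x s * z x s)))) - ((a) * (pdx 1 y x s * pdx 2 z x s)))) ((((((y x s * ztt x s) - (ytt x s * z x s)) + (((2) * ut x s) * ((y x s * pdx 1 z x s) - (pdx 1 y x s * z x s)))) + (((2) * u x s) * ((((yt x s * pdx 1 z x s) + (y x s * pdx 1 zt x s)) - (pdx 1 yt x s * z x s)) - (pdx 1 y x s * zt x s)))) - ((a) * ((pdx 1 yt x s * pdx 2 z x s) + (pdx 1 y x s * pdx 2 zt x s))))) s :=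
      Filter.Eventually.of_forall fun x _ s _ => hGd' x s
    exact (intervalIntegral.hasDerivAt_integral_of_dominated_loc_of_deriv_le
      (F := fun s x => ((((y x s * zt x s) - (yt x s * z x s)) + (((2) * u x s) * ((y x s * pdx 1 z x s) - (pdx 1 y x s * z x s)))) - ((a) * (pdx 1 y x s * pdx 2 z x s)))) (F' := fun s x => (((((y x s * ztt x s) - (ytt x s * z x s)) + (((2) * ut x s) * ((y x s * pdx 1 z x s) - (pdx 1 y x s * z x s)))) + (((2) * u x s) * ((((yt x s * pdx 1 z x s) + (y x s * pdx 1 zt x s)) - (pdx 1 yt x s * z x s)) - (pdx 1 y x s * zt x s)))) - ((a) * ((pdx 1 yt x s * pdx 2 z x s) + (pdx 1 y x s * pdx 2 zt x s))))) (bound := fun _ => M)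
      (Metric.ball_mem_nhds t one_pos) h1 h2 h3 h4 h5 h6).2
  -- Stage 3 : the derivative vanishes
  have hzero : ∀ t : ℝ, (∫ x in (0:ℝ)..(2 * π), (((((y x t * ztt x t) - (ytt x t * z x t)) + (((2) * ut x t) * ((y x t * pdx 1 z x t) - (pdx 1 y x t * z x t)))) + (((2) * u x t) * ((((yt x t * pdx 1 z x t) + (y x t * pdx 1 zt x t)) - (pdx 1 yt x t * z x t)) - (pdx 1 y x t * zt x t)))) - ((a) * ((pdx 1 yt x t * pdx 2 z x t) + (pdx 1 y x t * pdx 2 zt x t))))) + bt t * C₁ - ct t * B₁ = 0 := by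
    intro t
    have hHd : ∀ x : ℝ, HasDerivAt (fun x' => ((((((((a) * ((((u x' t * ((pdx 1 y x' t * pdx 2 z x' t) - (pdx 2 y x' t * pdx 1 z x' t))) - (u x' t * ((y x' t * pdx 3 z x' t) - (pdx 3 y x' t * z x' t)))) - (pdx 1 u x' t * ((y x' t * pdx 2 z x' t) - (pdx 2 y x' t * z x' t)))) + (pdx 2 u x' t * ((y x' t * pdx 1 z x' t) - (pdx 1 y x' t * z x' t))))) + ((a) * ((pdx 2 yt x' t * z x' t) - (pdx 1 yt x' t * pdx 1 z x' t)))) + ((B₁) * (((pdx 2 u x' t * z x' t) - (pdx 1 u x' t * pdx 1 z x' t)) + (u x' t * pdx 2 z x' t)))) - ((a) * (y x' t * pdx 2 zt x' t))) - ((C₁) * (((pdx 2 u x' t * y x' t) - (pdx 1 u x' t * pdx 1 y x' t)) + (u x' t * pdx 2 y x' t)))) - ((((3) * u x' t) * u x' t) * ((y x' t * pdx 1 z x' t) - (pdx 1 y x' t * z x' t)))) - (((2) * u x' t) * ((y x' t * zt x' t) - (yt x' t * z x' t))))) ((((((((0 * ((((u x t * ((pdx 1 y x t * pdx 2 z x t)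 - (pdx 2 y x t * pdx 1 z x t))) - (u x t * ((y x t * pdx 3 z x t) - (pdx 3 y x t * z x t)))) - (pdx 1 u x t * ((y x t * pdx 2 z x t) - (pdx 2 y x t * z x t)))) + (pdx 2 u x t * ((y x t * pdx 1 z x t) - (pdx 1 y x t * z x t)))) + (a) * ((((pdx 1 u x t * ((pdx 1 y x t * pdx 2 z x t) - (pdx 2 y x t * pdx 1 z x t)) + u x t * ((pdx 2 y x t * pdx 2 z x t + pdx 1 y x t * pdx 3 z x t) - (pdx 3 y x t * pdx 1 z x t + pdx 2 y x t * pdx 2 z x t))) - (pdx 1 u x t * ((y x t * pdx 3 z x t) - (pdx 3 y x t * z x t)) + u x t * ((pdx 1 y x t * pdx 3 z x t + y x t * pdx 4 z x t) - (pdx 4 y x t * z x t + pdx 3 y x t * pdx 1 z x t)))) - (pdx 2 u x t * ((y x t * pdx 2 z x t) - (pdx 2 y x t * z x t)) + pdx 1 u x t * ((pdx 1 y x t * pdx 2 z x t + y x t * pdx 3 z x t) - (pdx 3 y x t * z x t + pdx 2 y x t * pdx 1 z x t)))) + (pdx 3 u x t * ((y x t * pdx 1 z x t) - (pdx 1 y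 x t * z x t)) + pdx 2 u x t * ((pdx 1 y x t * pdx 1 z x t + y x t * pdx 2 z x t) - (pdx 2 y x t * z x t + pdx 1 y x t * pdx 1 z x t))))) + (0 * ((pdx 2 yt x t * z x t) - (pdx 1 yt x t * pdx 1 z x t)) + (a) * ((pdx 3 yt x t * z x t + pdx 2 yt x t * pdx 1 z x t) - (pdx 2 yt x t * pdx 1 z x t + pdx 1 yt x t * pdx 2 z x t)))) + (0 * (((pdx 2 u x t * z x t) - (pdx 1 u x t * pdx 1 z x t)) + (u x t * pdx 2 z x t)) + (B₁) * (((pdx 3 u x t * z x t + pdx 2 u x t * pdx 1 z x t) - (pdx 2 u x t * pdx 1 z x t + pdx 1 u x t * pdx 2 z x t)) + (pdx 1 u x t * pdx 2 z x t + u x t * pdx 3 z x t)))) - (0 * (y x t * pdx 2 zt x t) + (a) * (pdx 1 y x t * pdx 2 zt x t + y x t * pdx 3 zt x t))) - (0 * (((pdx 2 u x t * y x t) - (pdx 1 u x t * pdx 1 y x t)) + (u x t * pdx 2 y x t)) + (C₁) * (((pdx 3 u x t * y x t + pdx 2 u x t * pdx 1 y x t) - (pdx 2 u x t * pdx 1 y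 x t + pdx 1 u x t * pdx 2 y x t)) + (pdx 1 u x t * pdx 2 y x t + u x t * pdx 3 y x t)))) - (((0 * u x t + (3) * pdx 1 u x t) * u x t + ((3) * u x t) * pdx 1 u x t) * ((y x t * pdx 1 z x t) - (pdx 1 y x t * z x t)) + (((3) * u x t) * u x t) * ((pdx 1 y x t * pdx 1 z x t + y x t * pdx 2 z x t) - (pdx 2 y x t * z x t + pdx 1 y x t * pdx 1 z x t)))) - ((0 * u x t + (2) * pdx 1 u x t) * ((y x t * zt x t) - (yt x t * z x t)) + ((2) * u x t) * ((pdx 1 y x t * zt x t + y x t * pdx 1 zt x t) - (pdx 1 yt x t * z x t + yt x t * pdx 1 z x t))))) x :=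
      fun x => ((((((((hasDerivAt_const x (a)).mul (((((hx0_u x t).mul (((hx_y 1 x t).mul (hx_z 2 x t)).sub ((hx_y 2 x t).mul (hx_z 1 x t)))).sub ((hx0_u x t).mul (((hx0_y x t).mul (hx_z 3 x t)).sub ((hx_y 3 x t).mul (hx0_z x t))))).sub ((hx_u 1 x t).mul (((hx0_y x t).mul (hx_z 2 x t)).sub ((hx_y 2 x t).mul (hx0_z x t))))).add ((hx_u 2 x t).mul (((hx0_y x t).mul (hx_z 1 x t)).sub ((hx_y 1 x t).mul (hx0_z x t)))))).add ((hasDerivAt_const x (a)).mul (((hx_yt 2 x t).mul (hx0_z x t)).sub ((hx_yt 1 x t).mul (hx_z 1 x t))))).add ((hasDerivAt_const x (B₁)).mul ((((hx_u 2 x t).mul (hx0_z x t)).sub ((hx_u 1 x t).mul (hx_z 1 x t))).add ((hx0_u x t).mul (hx_z 2 x t))))).sub ((hasDerivAt_const x (a)).mul ((hx0_y x t).mul (hx_zt 2 x t)))).sub ((hasDerivAt_const x (C₁)).mul ((((hx_u 2 x t).mul (hx0_y x t)).sub ((hx_u 1 x t).mul (hx_y 1 x t))).add ((hx0_u x t).mul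 (hx_y 2 x t))))).sub ((((hasDerivAt_const x (3)).mul (hx0_u x t)).mul (hx0_u x t)).mul (((hx0_y x t).mul (hx_z 1 x t)).sub ((hx_y 1 x t).mul (hx0_z x t))))).sub (((hasDerivAt_const x (2)).mul (hx0_u x t)).mul (((hx0_y x t).mul (hx0_zt x t)).sub ((hx0_yt x t).mul (hx0_z x t)))))
    have hHd' : ∀ x : ℝ, HasDerivAt (fun x' => ((((((((a) * ((((u x' t * ((pdx 1 y x' t * pdx 2 z x' t) - (pdx 2 y x' t * pdx 1 z x' t))) - (u x' t * ((y x' t * pdx 3 z x' t) - (pdx 3 y x' t * z x' t)))) - (pdx 1 u x' t * ((y x' t * pdx 2 z x' t) - (pdx 2 y x' t * z x' t)))) + (pdx 2 u x' t * ((y x' t * pdx 1 z x' t) - (pdx 1 y x' t * z x' t))))) + ((a) * ((pdx 2 yt x' t * z x' t) - (pdx 1 yt x' t * pdx 1 z x' t)))) + ((B₁) * (((pdx 2 u x' t * z x' t) - (pdx 1 u x' t * pdx 1 z x' t)) + (u x' t * pdx 2 z x' t)))) - ((a) * (y x' t * pdx 2 zt x' t))) - ((C₁) * (((pdx 2 u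 x' t * y x' t) - (pdx 1 u x' t * pdx 1 y x' t)) + (u x' t * pdx 2 y x' t)))) - ((((3) * u x' t) * u x' t) * ((y x' t * pdx 1 z x' t) - (pdx 1 y x' t * z x' t)))) - (((2) * u x' t) * ((y x' t * zt x' t) - (yt x' t * z x' t)))))
        ((((((y x t * ztt x t) - (ytt x t * z x t)) + (((2) * ut x t) * ((y x t * pdx 1 z x t) - (pdx 1 y x t * z x t)))) + (((2) * u x t) * ((((yt x t * pdx 1 z x t) + (y x t * pdx 1 zt x t)) - (pdx 1 yt x t * z x t)) - (pdx 1 y x t * zt x t)))) - ((a) * ((pdx 1 yt x t * pdx 2 z x t) + (pdx 1 y x t * pdx 2 zt x t)))) - C₁ * (pdx 3 y x t * u x t) + B₁ * (pdx 3 z x t * u x t)) x := fun x => by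
      have h := hHd x
      convert h using 1
      rw [hJacy x t, hJacz x t, hKdV x t]
      ring
    have hcont : Continuous (fun x =>
        (((((y x t * ztt x t) - (ytt x t * z x t)) + (((2) * ut x t) * ((y x t * pdx 1 z x t) - (pdx 1 y x t * z x t)))) + (((2) * u x t) * ((((yt x t * pdx 1 z x t) + (y x t * pdx 1 zt x t)) - (pdx 1 yt x t * z x t)) - (pdx 1 y x t * zt x t)))) - ((a) * ((pdx 1 yt x t * pdx 2 z x t) + (pdx 1 y x t * pdx 2 zt x t)))) - C₁ * (pdx 3 y x t * u x t) + B₁ * (pdx 3 z x t * u x t)) :=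
      ((cGtx t).sub (continuous_const.mul ((s_y 3 t).mul (s0_u t)))).add
        (continuous_const.mul ((s_z 3 t).mul (s0_u t)))
    have hftc := intervalIntegral.integral_eq_sub_of_hasDerivAt
      (f := fun x' => ((((((((a) * ((((u x' t * ((pdx 1 y x' t * pdx 2 z x' t) - (pdx 2 y x' t * pdx 1 z x' t))) - (u x' t * ((y x' t * pdx 3 z x' t) - (pdx 3 y x' t * z x' t)))) - (pdx 1 u x' t * ((y x' t * pdx 2 z x' t) - (pdx 2 y x' t * z x' t)))) + (pdx 2 u x' t * ((y x' t * pdx 1 z x' t) - (pdx 1 y x' t * z x' t))))) + ((a) * ((pdx 2 yt x' t * z x' t) - (pdx 1 yt x' t * pdx 1 z x' t)))) + ((B₁) * (((pdx 2 u x' t * z x' t) - (pdx 1 u x' t * pdx 1 z x' t)) + (u x' t * pdx 2 z x' t)))) - ((a) * (y x' t * pdx 2 zt x' t))) - ((C₁) * (((pdx 2 u x' t * y x' t) - (pdx 1 u x' t * pdx 1 y x' t)) + (u x' t * pdx 2 y x' t)))) - ((((3) * u x' t) * u x' t) * ((y x' t * pdx 1 z x' t) - (pdx 1 y x' t * z x'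 t)))) - (((2) * u x' t) * ((y x' t * zt x' t) - (yt x' t * z x' t))))) (a := 0) (b := 2 * π)
      (fun x _ => hHd' x) (hcont.intervalIntegrable _ _)
    -- periodicity of all the ingredients
    have hytper : ∀ t' : ℝ, Function.Periodic (fun x => yt x t') (2 * π) := by
      intro t' x
      have h1 : (fun s => y (x + 2 * π) s) = (fun s => y x s) := funext fun s => hyp s x
      have h2 := hyt (x + 2 * π) t'
      rw [h1] at h2
      exact h2.unique (hyt x t')
    have hztper : ∀ t' : ℝ, Function.Periodic (fun x => zt x t') (2 * π) := by
      intro t' x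
      have h1 : (fun s => z (x + 2 * π) s) = (fun s => z x s) := funext fun s => hzp s x
      have h2 := hzt (x + 2 * π) t'
      rw [h1] at h2
      exact h2.unique (hzt x t')
    have pu : ∀ n : ℕ, pdx n u (2 * π) t = pdx n u 0 t := fun n => by
      have := (pdx_periodic n t (hup t)) 0; simpa using this
    have py : ∀ n : ℕ, pdx n y (2 * π) t = pdx n y 0 t := fun n => by
      have := (pdx_periodic n t (hyp t)) 0; simpa using this
    have pz : ∀ n : ℕ, pdx n z (2 * π) t = pdx n z 0 t := fun n => by
      have := (pdx_periodic n t (hzp t)) 0; simpa using this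
    have pyt : ∀ n : ℕ, pdx n yt (2 * π) t = pdx n yt 0 t := fun n => by
      have := (pdx_periodic n t (hytper t)) 0; simpa using this
    have pzt : ∀ n : ℕ, pdx n zt (2 * π) t = pdx n zt 0 t := fun n => by
      have := (pdx_periodic n t (hztper t)) 0; simpa using this
    have pu0 : u (2 * π) t = u 0 t := by have := hup t 0; simpa using this
    have py0 : y (2 * π) t = y 0 t := by have := hyp t 0; simpa using this
    have pz0 : z (2 * π) t = z 0 t := by have := hzp t 0; simpa using this
    have pyt0 : yt (2 * π) t = yt 0 t := by have := hytper t 0; simpa using this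
    have pzt0 : zt (2 * π) t = zt 0 t := by have := hztper t 0; simpa using this
    have hcore : (∫ x in (0:ℝ)..(2 * π),
        ((((((y x t * ztt x t) - (ytt x t * z x t)) + (((2) * ut x t) * ((y x t * pdx 1 z x t) - (pdx 1 y x t * z x t)))) + (((2) * u x t) * ((((yt x t * pdx 1 z x t) + (y x t * pdx 1 zt x t)) - (pdx 1 yt x t * z x t)) - (pdx 1 y x t * zt x t)))) - ((a) * ((pdx 1 yt x t * pdx 2 z x t) + (pdx 1 y x t * pdx 2 zt x t)))) - C₁ * (pdx 3 y x t * u x t) + B₁ * (pdx 3 z x t * u x t))) = 0 := by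
      rw [hftc]
      simp only [pu, py, pz, pyt, pzt, pu0, py0, pz0, pyt0, pzt0]
      ring
    have i1 : IntervalIntegrable (fun x => (((((y x t * ztt x t) - (ytt x t * z x t)) + (((2) * ut x t) * ((y x t * pdx 1 z x t) - (pdx 1 y x t * z x t)))) + (((2) * u x t) * ((((yt x t * pdx 1 z x t) + (y x t * pdx 1 zt x t)) - (pdx 1 yt x t * z x t)) - (pdx 1 y x t * zt x t)))) - ((a) * ((pdx 1 yt x t * pdx 2 z x t) + (pdx 1 y x t * pdx 2 zt x t))))) MeasureTheory.volume 0 (2 * π) :=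
      (cGtx t).intervalIntegrable _ _
    have i2 : IntervalIntegrable (fun x => C₁ * (pdx 3 y x t * u x t))
        MeasureTheory.volume 0 (2 * π) :=
      (continuous_const.mul ((s_y 3 t).mul (s0_u t))).intervalIntegrable _ _
    have i3 : IntervalIntegrable (fun x => B₁ * (pdx 3 z x t * u x t))
        MeasureTheory.volume 0 (2 * π) :=
      (continuous_const.mul ((s_z 3 t).mul (s0_u t))).intervalIntegrable _ _
    rw [intervalIntegral.integral_add (i1.sub i2) i3, intervalIntegral.integral_sub i1 i2,
      intervalIntegral.integral_const_mul, intervalIntegral.integral_const_mul] at hcore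
    have hb := hB₁ t
    have hc := hC₁ t
    linear_combination hcore + C₁ * hb - B₁ * hc
  -- Stage 4 : conclusion
  have hσd : ∀ t : ℝ, HasDerivAt
      (fun s => (∫ x in (0:ℝ)..(2 * π), ((((y x s * zt x s) - (yt x s * z x s)) + (((2) * u x s) * ((y x s * pdx 1 z x s) - (pdx 1 y x s * z x s)))) - ((a) * (pdx 1 y x s * pdx 2 z x s)))) + b s * C₁ - c s * B₁) 0 t := by
    intro t
    have h := ((hInt t).add ((hbt t).mul_const C₁)).sub ((hct t).mul_const B₁)
    rwa [hzero t] at h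
  have hconst := is_const_of_deriv_eq_zero (fun t => (hσd t).differentiableAt)
    (fun t => (hσd t).deriv) t₁ t₂
  have hbridge : ∀ t : ℝ,
      ((∫ x in (0:ℝ)..(2 * π),
          (y x t * zt x t - yt x t * z x t
            + 2 * u x t * (y x t * pdx 1 z x t - pdx 1 y x t * z x t)))
        + b t * C₁ - c t * B₁
        - a * ∫ x in (0:ℝ)..(2 * π), pdx 1 y x t * pdx 2 z x t)
      = (∫ x in (0:ℝ)..(2 * π), ((((y x t * zt x t) - (yt x t * z x t)) + (((2) * u x t) * ((y x t * pdx 1 z x t) - (pdx 1 y x t * z x t)))) - ((a) * (pdx 1 y x t * pdx 2 z x t)))) + b t * C₁ - c t * B₁ := by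
    intro t
    have iA : IntervalIntegrable (fun x => (y x t * zt x t - yt x t * z x t
        + 2 * u x t * (y x t * pdx 1 z x t - pdx 1 y x t * z x t)))
        MeasureTheory.volume 0 (2 * π) :=
      (((((s0_y t).mul (s0_zt t)).sub ((s0_yt t).mul (s0_z t))).add ((continuous_const.mul (s0_u t)).mul (((s0_y t).mul (s_z 1 t)).sub ((s_y 1 t).mul (s0_z t)))))).intervalIntegrable _ _
    have iB : IntervalIntegrable (fun x => a * (pdx 1 y x t * pdx 2 z x t))
        MeasureTheory.volume 0 (2 * π) :=
      (continuous_const.mul ((s_y 1 t).mul (s_z 2 t))).intervalIntegrable _ _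
    have e1 : (∫ x in (0:ℝ)..(2 * π), ((((y x t * zt x t) - (yt x t * z x t)) + (((2) * u x t) * ((y x t * pdx 1 z x t) - (pdx 1 y x t * z x t)))) - ((a) * (pdx 1 y x t * pdx 2 z x t))))
        = ∫ x in (0:ℝ)..(2 * π),
          ((y x t * zt x t - yt x t * z x t
            + 2 * u x t * (y x t * pdx 1 z x t - pdx 1 y x t * z x t))
           - a * (pdx 1 y x t * pdx 2 z x t)) := by
      apply intervalIntegral.integral_congr
      intro x _
      ring
    rw [e1, intervalIntegral.integral_sub iA iB, intervalIntegral.integral_const_mul]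
    ring
  rw [hbridge t₁, hbridge t₂]
  simpa using hconst
end

section
/- For smooth 2π-periodic functions h₁, h₂, the Virasoro curvature applied as in 5.2 satisfies the integral identity: ∫_{S¹}(4(h₁h₂'' - h₁''h₂)h₁h₂ + 8(h₁h₂' - h₁'h₂)h₁'h₂) dx = -4∫_{S¹}(h₁'h₂ - h₁h₂')² dx. -/
open Real

/-- For smooth `2π`-periodic `h₁, h₂`:
`∫ (4(h₁h₂'' - h₁''h₂)h₁h₂ + 8(h₁h₂' - h₁'h₂)h₁'h₂) dx = -4∫ (h₁'h₂ - h₁h₂')² dx`,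
the `a₁ = a₂ = 0` part of the Virasoro sectional curvature simplification. -/
theorem stmt18 (h₁ h₂ : ℝ → ℝ)
    (hh₁ : ContDiff ℝ (⊤ : ℕ∞) h₁) (hh₂ : ContDiff ℝ (⊤ : ℕ∞) h₂)
    (hp₁ : Function.Periodic h₁ (2 * π)) (hp₂ : Function.Periodic h₂ (2 * π)) :
    (∫ x in (0:ℝ)..(2 * π),
      (4 * (h₁ x * iteratedDeriv 2 h₂ x - iteratedDeriv 2 h₁ x * h₂ x) * h₁ x * h₂ x
        + 8 * (h₁ x * deriv h₂ x - deriv h₁ x * h₂ x) * deriv h₁ x * h₂ x))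
    = -4 * ∫ x in (0:ℝ)..(2 * π), (deriv h₁ x * h₂ x - h₁ x * deriv h₂ x) ^ 2 := by
  have hh₁' : ContDiff ℝ (↑(⊤ : ℕ∞)) h₁ := hh₁.of_le (by simp)
  have hh₂' : ContDiff ℝ (↑(⊤ : ℕ∞)) h₂ := hh₂.of_le (by simp)
  have hd₁ : ContDiff ℝ (↑(⊤ : ℕ∞)) (deriv h₁) := (contDiff_infty_iff_deriv.mp hh₁').2
  have hd₂ : ContDiff ℝ (↑(⊤ : ℕ∞)) (deriv h₂) := (contDiff_infty_iff_deriv.mp hh₂').2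
  have hi2 : ∀ f : ℝ → ℝ, iteratedDeriv 2 f = deriv (deriv f) := by
    intro f
    rw [iteratedDeriv_succ, iteratedDeriv_one]
  -- continuity facts
  have c₁ := hh₁.continuous
  have c₂ := hh₂.continuous
  have cd₁ := hd₁.continuous
  have cd₂ := hd₂.continuous
  have cdd₁ : Continuous (deriv (deriv h₁)) := (contDiff_infty_iff_deriv.mp hd₁).2.continuous
  have cdd₂ : Continuous (deriv (deriv h₂)) := (contDiff_infty_iff_deriv.mp hd₂).2.continuous
  set A : ℝ → ℝ := fun x =>
    4 * (h₁ x * iteratedDeriv 2 h₂ x - iteratedDeriv 2 h₁ x * h₂ x) * h₁ x * h₂ x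
      + 8 * (h₁ x * deriv h₂ x - deriv h₁ x * h₂ x) * deriv h₁ x * h₂ x with hA
  set B : ℝ → ℝ := fun x => (deriv h₁ x * h₂ x - h₁ x * deriv h₂ x) ^ 2 with hB
  have cA : Continuous A := by
    rw [hA]
    simp only [hi2]
    fun_prop
  have cB : Continuous B := by fun_prop
  set F : ℝ → ℝ := fun x => 4 * (h₁ x * deriv h₂ x - deriv h₁ x * h₂ x) * h₁ x * h₂ x with hF
  have hFd : ∀ x : ℝ, HasDerivAt F (A x + 4 * B x) x := by
    intro x
    have H1 : HasDerivAt h₁ (deriv h₁ x) x := (hh₁'.differentiable (by simp) x).hasDerivAt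
    have H2 : HasDerivAt h₂ (deriv h₂ x) x := (hh₂'.differentiable (by simp) x).hasDerivAt
    have H1' : HasDerivAt (deriv h₁) (deriv (deriv h₁) x) x :=
      (hd₁.differentiable (by simp) x).hasDerivAt
    have H2' : HasDerivAt (deriv h₂) (deriv (deriv h₂) x) x :=
      (hd₂.differentiable (by simp) x).hasDerivAt
    have := ((((H1.mul H2').sub (H1'.mul H2)).const_mul 4).mul H1).mul H2
    refine this.congr_deriv ?_
    simp only [hA, hB, hi2, Pi.mul_apply, Pi.sub_apply]
    ring
  have hint : ∫ x in (0:ℝ)..(2 * π), (A x + 4 * B x) = F (2 * π) - F 0 :=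
    intervalIntegral.integral_eq_sub_of_hasDerivAt (fun x _ => hFd x)
      ((cA.add (continuous_const.mul cB)).intervalIntegrable _ _)
  have hFper : F (2 * π) = F 0 := by
    have e₁ : h₁ (2 * π) = h₁ 0 := by simpa using hp₁ 0
    have e₂ : h₂ (2 * π) = h₂ 0 := by simpa using hp₂ 0
    have hfun₁ : (fun y => h₁ (y + 2 * π)) = h₁ := funext hp₁
    have hfun₂ : (fun y => h₂ (y + 2 * π)) = h₂ := funext hp₂
    have e₃ : deriv h₁ (2 * π) = deriv h₁ 0 := by
      have := deriv_comp_add_const (f := h₁) (a := 2 * π) (x := 0)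
      rw [hfun₁] at this
      simpa using this.symm
    have e₄ : deriv h₂ (2 * π) = deriv h₂ 0 := by
      have := deriv_comp_add_const (f := h₂) (a := 2 * π) (x := 0)
      rw [hfun₂] at this
      simpa using this.symm
    simp [hF, e₁, e₂, e₃, e₄]
  have hsplit : (∫ x in (0:ℝ)..(2 * π), (A x + 4 * B x))
      = (∫ x in (0:ℝ)..(2 * π), A x) + 4 * ∫ x in (0:ℝ)..(2 * π), B x := by
    rw [intervalIntegral.integral_add (cA.intervalIntegrable _ _)
      ((continuous_const.mul cB : Continuous fun x => 4 * B x).intervalIntegrable _ _) (g := fun x => 4 * B x),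
      intervalIntegral.integral_const_mul]
  have : (∫ x in (0:ℝ)..(2 * π), A x) + 4 * ∫ x in (0:ℝ)..(2 * π), B x = 0 := by
    rw [← hsplit, hint, hFper, sub_self]
  linarith [this]
end

section
/- For the Christoffel symbol Γ_f(h,k) = -(hk)_x / f_x of the L² metric on orientation-preserving embeddings of ℝ, the curvature expression R_f(h,k)ℓ = -dΓ(f)(h)(k,ℓ) + dΓ(f)(k)(h,ℓ) + Γ_f(h, Γ_f(k,ℓ)) - Γ_f(k, Γ_f(h,ℓ)) equals (1/f_x³)( f_xx h_x k ℓ - f_xx h k_x ℓ + f_x h k_xx ℓ - f_x h_xx k ℓ + 2 f_x h k_x ℓ_x - 2 f_x h_x k ℓ_x ). -/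
/-- For the Christoffel symbol `Γ_f(h,k) = -(hk)_x/f_x` of the L² metric
on orientation-preserving embeddings of ℝ, the curvature expression
`R_f(h,k)ℓ = -dΓ(f)(h)(k,ℓ) + dΓ(f)(k)(h,ℓ) + Γ_f(h,Γ_f(k,ℓ)) - Γ_f(k,Γ_f(h,ℓ))`
(with `dΓ(f)(h)(k,ℓ) = (kℓ)_x h_x / f_x²`) equals
`(1/f_x³)(f_xx h_x kℓ - f_xx h k_x ℓ + f_x h k_xx ℓ - f_x h_xx kℓ + 2f_x h k_x ℓ_x - 2f_x h_x k ℓ_x)`. -/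
theorem stmt19 (f h k l : ℝ → ℝ)
    (hf : ContDiff ℝ (⊤ : ℕ∞) f) (hfx : ∀ x, 0 < deriv f x)
    (hh : ContDiff ℝ (⊤ : ℕ∞) h) (hk : ContDiff ℝ (⊤ : ℕ∞) k) (hl : ContDiff ℝ (⊤ : ℕ∞) l)
    (hhc : HasCompactSupport h) (hkc : HasCompactSupport k) (hlc : HasCompactSupport l)
    (x : ℝ) :
    let Γ : (ℝ → ℝ) → (ℝ → ℝ) → (ℝ → ℝ) :=
      fun p q => fun w => (-(deriv (fun v => p v * q v) w)) / deriv f w;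
    -(deriv (fun v => k v * l v) x * deriv h x / (deriv f x) ^ 2)
      + deriv (fun v => h v * l v) x * deriv k x / (deriv f x) ^ 2
      + Γ h (Γ k l) x - Γ k (Γ h l) x
    = (1 / (deriv f x) ^ 3) *
        (iteratedDeriv 2 f x * deriv h x * k x * l x
          - iteratedDeriv 2 f x * h x * deriv k x * l x
          + deriv f x * h x * iteratedDeriv 2 k x * l x
          - deriv f x * iteratedDeriv 2 h x * k x * l x
          + 2 * deriv f x * h x * deriv k x * deriv l x
          - 2 * deriv f x * deriv h x * k x * deriv l x) := by
  intro Γ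
  have hf' : ContDiff ℝ (↑(⊤:ℕ∞)) f := hf.of_le (by exact_mod_cast le_top)
  have hh' : ContDiff ℝ (↑(⊤:ℕ∞)) h := hh.of_le (by exact_mod_cast le_top)
  have hk' : ContDiff ℝ (↑(⊤:ℕ∞)) k := hk.of_le (by exact_mod_cast le_top)
  have hl' : ContDiff ℝ (↑(⊤:ℕ∞)) l := hl.of_le (by exact_mod_cast le_top)
  clear hf hh hk hl
  have hg : ContDiff ℝ (↑(⊤:ℕ∞)) (deriv f) := (contDiff_infty_iff_deriv.mp hf').2
  have hgd : Differentiable ℝ (deriv f) := hg.differentiable (by simp)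
  have hfne : ∀ y, deriv f y ≠ 0 := fun y => (hfx y).ne'
  -- derivative of a product
  have dmul : ∀ (p q : ℝ → ℝ), Differentiable ℝ p → Differentiable ℝ q →
      deriv (fun v => p v * q v) = fun v => deriv p v * q v + p v * deriv q v := by
    intro p q hp hq
    funext v
    exact deriv_mul (hp v) (hq v)
  -- Γ p q pointwise
  have hΓeq : ∀ (p q : ℝ → ℝ), Differentiable ℝ p → Differentiable ℝ q →
      Γ p q = fun w => (-(deriv p w * q w + p w * deriv q w)) / deriv f w := by
    intro p q hp hq
    funext w
    show (-(deriv (fun v => p v * q v) w)) / deriv f w = _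
    rw [dmul p q hp hq]
  -- main computation for the composed Christoffel term
  have key : ∀ (p q r : ℝ → ℝ), ContDiff ℝ (↑(⊤:ℕ∞)) p → ContDiff ℝ (↑(⊤:ℕ∞)) q → ContDiff ℝ (↑(⊤:ℕ∞)) r →
      Γ p (Γ q r) x =
        -(deriv p x * ((-(deriv q x * r x + q x * deriv r x)) / deriv f x)
          + p x * ((-(deriv (deriv q) x * r x + deriv q x * deriv r x
                + (deriv q x * deriv r x + q x * deriv (deriv r) x)) * deriv f x
              - (-(deriv q x * r x + q x * deriv r x)) * deriv (deriv f) x)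
            / (deriv f x) ^ 2)) / deriv f x := by
    intro p q r hp hq hr
    have hpd := hp.differentiable (by simp)
    have hqd := hq.differentiable (by simp)
    have hrd := hr.differentiable (by simp)
    have hqd2 : Differentiable ℝ (deriv q) := (contDiff_infty_iff_deriv.mp hq).2.differentiable (by simp)
    have hrd2 : Differentiable ℝ (deriv r) := (contDiff_infty_iff_deriv.mp hr).2.differentiable (by simp)
    show (-(deriv (fun v => p v * Γ q r v) x)) / deriv f x = _
    rw [hΓeq q r hqd hrd]
    have hnum : Differentiable ℝ (fun w => -(deriv q w * r w + q w * deriv r w)) :=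
      ((hqd2.mul hrd).add (hqd.mul hrd2)).neg
    have hquot : DifferentiableAt ℝ (fun w => (-(deriv q w * r w + q w * deriv r w)) / deriv f w) x :=
      (hnum x).div (hgd x) (hfne x)
    rw [deriv_fun_mul (hpd x) hquot,
      deriv_fun_div (hnum x) (hgd x) (hfne x),
      show deriv (fun w => -(deriv q w * r w + q w * deriv r w)) x = _ from deriv.fun_neg,
      deriv_fun_add (f := fun w => deriv q w * r w) (g := fun w => q w * deriv r w) ((hqd2 x).mul (hrd x)) ((hqd x).mul (hrd2 x)),
      deriv_fun_mul (hqd2 x) (hrd x), deriv_fun_mul (hqd x) (hrd2 x)]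
  rw [key h k l hh' hk' hl', key k h l hk' hh' hl',
    dmul k l (hk'.differentiable (by simp)) (hl'.differentiable (by simp)),
    dmul h l (hh'.differentiable (by simp)) (hl'.differentiable (by simp))]
  have h2 : ∀ p : ℝ → ℝ, iteratedDeriv 2 p x = deriv (deriv p) x := by
    intro p
    rw [show (2:ℕ) = 1 + 1 from rfl, iteratedDeriv_succ, iteratedDeriv_one]
  rw [h2 f, h2 k, h2 h]
  field_simp
  ring
end
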